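/- arXiv:1504.06028 — 7 statements merged into one kernel-verified Lean document; each statement's English description precedes it below -/
import Mathlib

section
/- For a Markov chain W → X → Ŷ with finite alphabets, and any ρ > 0 such that L(W,ρ) < 1, the excess distortion probability satisfies P(ℓ(W,Ŷ) > ρ) ≥ 1 − (I(W;X) + log 2)/log(1/L(W,ρ)), where L(W,ρ) = sup_{w} P(ℓ(W,w) ≤ ρ) is the small ball probability and ℓ is a nonnegative distortion function. -/
open Finset Real

def IsPMF {α : Type*} [Fintype α] (p : α → ℝ) : Prop :=
  (∀ x, 0 ≤ p x) ∧ ∑ x, p x = 1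

noncomputable def KL2 {α : Type*} [Fintype α] (p q : α → ℝ) : ℝ :=
  ∑ x, p x * Real.logb 2 (p x / q x)

noncomputable def MI2 {α β : Type*} [Fintype α] [Fintype β] (p : α × β → ℝ) : ℝ :=
  ∑ x : α × β, p x * Real.logb 2 (p x / ((∑ b, p (x.1, b)) * (∑ a, p (a, x.2))))

noncomputable def H2 {α : Type*} [Fintype α] (p : α → ℝ) : ℝ :=
  -∑ x, p x * Real.logb 2 (p x)

noncomputable def push {α β : Type*} [Fintype α] (μ : α → ℝ) (K : α → β → ℝ) : β → ℝ :=
  fun y => ∑ x, μ x * K x y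

noncomputable def binH (p : ℝ) : ℝ :=
  -(p * Real.logb 2 p) - (1 - p) * Real.logb 2 (1 - p)

noncomputable def etaAt {α β : Type*} [Fintype α] [Fintype β]
    (μ : α → ℝ) (K : α → β → ℝ) : ℝ :=
  sSup { r | ∃ ν : α → ℝ, IsPMF ν ∧ (∀ x, μ x = 0 → ν x = 0) ∧ 0 < KL2 ν μ ∧
    r = KL2 (push ν K) (push μ K) / KL2 ν μ }

noncomputable def etaCh {α β : Type*} [Fintype α] [Fintype β] (K : α → β → ℝ) : ℝ :=
  sSup { r | ∃ μ ν : α → ℝ, IsPMF μ ∧ IsPMF ν ∧ (∀ x, μ x = 0 → ν x = 0) ∧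
    0 < KL2 ν μ ∧ r = KL2 (push ν K) (push μ K) / KL2 ν μ }

noncomputable def capacity2 {U V : Type*} [Fintype U] [Fintype V] (Ch : U → V → ℝ) : ℝ :=
  sSup { r | ∃ μ : U → ℝ, IsPMF μ ∧ r = MI2 (fun uv : U × V => μ uv.1 * Ch uv.1 uv.2) }

noncomputable def BSC (ε : ℝ) : Bool → Bool → ℝ := fun u v => if v = u then 1 - ε else ε

/-! The probability `A` that `ℓ(W, Ŷ) ≤ ρ` is the mean, under the joint law of `(W, X)`, of the
test `t(w, x) = P(ℓ(w, Ŷ) ≤ ρ | X = x)`; under the product of the marginals the same test has mean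
`B = P(ℓ(W', Ŷ) ≤ ρ)` with `W'` an independent copy of `W`, so `B ≤ L`. Data processing through
the binary test gives `d(A ‖ B) ≤ I(W; X)`, and `d(A ‖ B) ≥ A log (1 / L) - log 2` since binary
entropy is at most `log 2`. -/

noncomputable def binaryKL (A B : ℝ) : ℝ :=
  A * log (A / B) + (1 - A) * log ((1 - A) / (1 - B))

section Divergence

variable {ι : Type*} [Fintype ι]

lemma sub_le_mul_log_div {a b : ℝ} (ha : 0 ≤ a) (hb : 0 ≤ b) (hab : b = 0 → a = 0) :
    a - b ≤ a * log (a / b) := by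
  rcases ha.eq_or_lt with rfl | ha
  · simpa using hb
  have hb : 0 < b := hb.lt_of_ne fun h => ha.ne' (hab h.symm)
  have h := mul_le_mul_of_nonneg_left (log_le_sub_one_of_pos (div_pos hb ha)) ha.le
  rw [mul_sub, mul_div_cancel₀ _ ha.ne', ← inv_div, log_inv] at h
  linarith

lemma sum_mul_log_div_sum_le {a b : ι → ℝ} (ha : ∀ i, 0 ≤ a i) (hb : ∀ i, 0 ≤ b i)
    (hab : ∀ i, b i = 0 → a i = 0) :
    (∑ i, a i) * log ((∑ i, a i) / ∑ i, b i) ≤ ∑ i, a i * log (a i / b i) := by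
  set A := ∑ i, a i
  set B := ∑ i, b i
  rcases (sum_nonneg fun i _ => ha i : 0 ≤ A).eq_or_lt with hA | hA
  · have ha0 : ∀ i, a i = 0 := fun i =>
      (sum_eq_zero_iff_of_nonneg fun i _ => ha i).1 hA.symm i (mem_univ i)
    simp [A, ha0]
  have hB : 0 < B := by
    refine (sum_nonneg fun i _ => hb i).lt_of_ne fun hB => hA.ne' (sum_eq_zero fun i _ => hab i ?_)
    exact (sum_eq_zero_iff_of_nonneg fun i _ => hb i).1 hB.symm i (mem_univ i)
  have hc : 0 < A / B := div_pos hA hB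
  -- Compare `a` with the rescaled `b * (A / B)`, which has the same total mass.
  have key : ∀ i, a i - b i * (A / B) ≤ a i * log (a i / b i) - a i * log (A / B) := by
    intro i
    have h := sub_le_mul_log_div (ha i) (mul_nonneg (hb i) hc.le)
      fun h => hab i ((mul_eq_zero.1 h).resolve_right hc.ne')
    rcases (ha i).eq_or_lt with h0 | hai
    · simpa [← h0] using mul_nonneg (hb i) hc.le
    have hbi : 0 < b i := (hb i).lt_of_ne fun h => hai.ne' (hab i h.symm)
    rwa [← div_div, log_div (div_pos hai hbi).ne' hc.ne', mul_sub] at h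
  have hsum : ∑ i, (a i - b i * (A / B)) = 0 := by
    rw [sum_sub_distrib, ← sum_mul, mul_div_cancel₀ _ hB.ne', sub_self]
  have := sum_le_sum fun i (_ : i ∈ univ) => key i
  rw [hsum, sum_sub_distrib, ← sum_mul] at this
  linarith

lemma binaryKL_sum_mul_le {a b t : ι → ℝ} (ha : IsPMF a) (hb : IsPMF b)
    (hab : ∀ i, b i = 0 → a i = 0) (ht0 : ∀ i, 0 ≤ t i) (ht1 : ∀ i, t i ≤ 1) :
    binaryKL (∑ i, a i * t i) (∑ i, b i * t i) ≤ ∑ i, a i * log (a i / b i) := by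
  have weighted : ∀ s : ι → ℝ, (∀ i, 0 ≤ s i) →
      (∑ i, a i * s i) * log ((∑ i, a i * s i) / ∑ i, b i * s i) ≤
        ∑ i, a i * s i * log (a i / b i) := by
    intro s hs
    refine (sum_mul_log_div_sum_le (fun i => mul_nonneg (ha.1 i) (hs i))
      (fun i => mul_nonneg (hb.1 i) (hs i)) fun i h => ?_).trans_eq (sum_congr rfl fun i _ => ?_)
    · rcases mul_eq_zero.1 h with h | h <;> simp [h, hab]
    · rcases eq_or_ne (s i) 0 with h | h
      · simp [h]
      · rw [mul_div_mul_right _ _ h]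
  have complement : ∀ c : ι → ℝ, IsPMF c → ∑ i, c i * (1 - t i) = 1 - ∑ i, c i * t i := by
    intro c hc
    simp only [mul_sub, mul_one, sum_sub_distrib, hc.2]
  have h1 := weighted t ht0
  have h2 := weighted (fun i => 1 - t i) fun i => sub_nonneg.2 (ht1 i)
  rw [complement a ha, complement b hb] at h2
  calc binaryKL (∑ i, a i * t i) (∑ i, b i * t i)
      ≤ ∑ i, (a i * t i * log (a i / b i) + a i * (1 - t i) * log (a i / b i)) := by
        rw [sum_add_distrib]; exact add_le_add h1 h2
    _ = ∑ i, a i * log (a i / b i) := sum_congr rfl fun i _ => by ring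

lemma mul_log_one_div_sub_log_two_le_binaryKL {A B L : ℝ} (hA0 : 0 ≤ A) (hA1 : A ≤ 1)
    (hB0 : 0 ≤ B) (hBL : B ≤ L) (hL1 : L < 1) (hBA : B = 0 → A = 0) :
    A * log (1 / L) - log 2 ≤ binaryKL A B := by
  have hB1 : 0 < 1 - B := by linarith
  have first : A * log A + A * log (1 / L) ≤ A * log (A / B) := by
    rcases hA0.eq_or_lt with rfl | hA
    · simp
    have hB : 0 < B := hB0.lt_of_ne fun h => hA.ne' (hBA h.symm)
    have hL : 0 < L := hB.trans_le hBL
    rw [← mul_add, ← log_mul hA.ne' (by positivity), mul_one_div]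
    exact mul_le_mul_of_nonneg_left
      (log_le_log (by positivity) (div_le_div_of_nonneg_left hA0 hB hBL)) hA0
  have second : (1 - A) * log (1 - A) ≤ (1 - A) * log ((1 - A) / (1 - B)) := by
    rcases (sub_nonneg.2 hA1).eq_or_lt with h | h
    · simp [← h]
    exact mul_le_mul_of_nonneg_left
      (log_le_log h (le_div_self h.le hB1 (by linarith))) h.le
  have entropy := binEntropy_le_log_two (p := A)
  rw [binEntropy, log_inv, log_inv] at entropy
  unfold binaryKL
  linarith

lemma KL2_eq_sum_mul_log_div (a b : ι → ℝ) :
    KL2 a b = (∑ i, a i * log (a i / b i)) / log 2 := by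
  simp only [KL2, logb, sum_div, mul_div_assoc]

lemma sum_mul_le_KL2_add_one_div_logb {a b t : ι → ℝ} {L : ℝ}
    (ha : IsPMF a) (hb : IsPMF b) (hab : ∀ i, b i = 0 → a i = 0)
    (ht0 : ∀ i, 0 ≤ t i) (ht1 : ∀ i, t i ≤ 1)
    (hbt : ∑ i, b i * t i ≤ L) (hL0 : 0 < L) (hL1 : L < 1) :
    ∑ i, a i * t i ≤ (KL2 a b + 1) / logb 2 (1 / L) := by
  set A := ∑ i, a i * t i
  set B := ∑ i, b i * t i
  have hBA : B = 0 → A = 0 := by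
    intro hB
    refine sum_eq_zero fun i _ => ?_
    rcases mul_eq_zero.1 ((sum_eq_zero_iff_of_nonneg fun i _ =>
      mul_nonneg (hb.1 i) (ht0 i)).1 hB i (mem_univ i)) with h | h <;> simp [h, hab]
  have hA1 : A ≤ 1 := ha.2 ▸ sum_le_sum fun i _ => mul_le_of_le_one_right (ha.1 i) (ht1 i)
  have hbound := (mul_log_one_div_sub_log_two_le_binaryKL
    (sum_nonneg fun i _ => mul_nonneg (ha.1 i) (ht0 i)) hA1
    (sum_nonneg fun i _ => mul_nonneg (hb.1 i) (ht0 i)) hbt hL1 hBA).trans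
    (binaryKL_sum_mul_le ha hb hab ht0 ht1)
  have hlog2 : 0 < log 2 := log_pos one_lt_two
  have hlogL : 0 < log (1 / L) := log_pos ((one_lt_div hL0).2 hL1)
  rw [KL2_eq_sum_mul_log_div, logb, div_add_one hlog2.ne', div_div_div_cancel_right₀ hlog2.ne',
    le_div_iff₀ hlogL]
  linarith

end Divergence

section Marginals

variable {α β : Type*} [Fintype α] [Fintype β]

noncomputable def prodMarginals (r : α × β → ℝ) : α × β → ℝ :=
  fun ab => (∑ b, r (ab.1, b)) * ∑ a, r (a, ab.2)

lemma MI2_eq_KL2_prodMarginals (r : α × β → ℝ) : MI2 r = KL2 r (prodMarginals r) := rfl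

lemma isPMF_prodMarginals {r : α × β → ℝ} (hr : IsPMF r) : IsPMF (prodMarginals r) := by
  refine ⟨fun ab => mul_nonneg (sum_nonneg fun b _ => hr.1 _) (sum_nonneg fun a _ => hr.1 _), ?_⟩
  have h := hr.2
  rw [Fintype.sum_prod_type] at h
  rw [Fintype.sum_prod_type]
  simp only [prodMarginals]
  rw [← sum_mul_sum, h, sum_comm, h, one_mul]

lemma eq_zero_of_prodMarginals_eq_zero {r : α × β → ℝ} (hr : ∀ ab, 0 ≤ r ab) {ab : α × β}
    (h : prodMarginals r ab = 0) : r ab = 0 := by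
  refine le_antisymm ?_ (hr ab)
  rcases mul_eq_zero.1 h with h | h
  · exact h ▸ single_le_sum (fun b _ => hr (ab.1, b)) (mem_univ ab.2)
  · exact h ▸ single_le_sum (fun a _ => hr (a, ab.2)) (mem_univ ab.1)

end Marginals

section MarkovChain

variable {W X Y : Type*} [Fintype W] [Fintype Y] {p : W × X × Y → ℝ}
  {E : W → Y → Prop} [DecidableRel E]

-- `P(E w Ŷ | X = x)`; junk value `0` when `P(X = x) = 0`.
noncomputable def condProb (p : W × X × Y → ℝ) (E : W → Y → Prop) [DecidableRel E]
    (w : W) (x : X) : ℝ :=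
  (∑ w', ∑ y, if E w y then p (w', x, y) else 0) / ∑ w', ∑ y, p (w', x, y)

lemma sum_sum_ite_le_sum_sum (hp : ∀ z, 0 ≤ p z) (w : W) (x : X) :
    ∑ w', ∑ y, (if E w y then p (w', x, y) else 0) ≤ ∑ w', ∑ y, p (w', x, y) :=
  sum_le_sum fun w' _ => sum_le_sum fun y _ => by split_ifs <;> simp [hp]

lemma condProb_nonneg (hp : ∀ z, 0 ≤ p z) (w : W) (x : X) : 0 ≤ condProb p E w x :=
  div_nonneg (sum_nonneg fun _ _ => sum_nonneg fun _ _ => by split_ifs <;> simp [hp])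
    (sum_nonneg fun _ _ => sum_nonneg fun _ _ => hp _)

lemma condProb_le_one (hp : ∀ z, 0 ≤ p z) (w : W) (x : X) : condProb p E w x ≤ 1 :=
  div_le_one_of_le₀ (sum_sum_ite_le_sum_sum hp w x) (sum_nonneg fun _ _ => sum_nonneg fun _ _ => hp _)

lemma marginal_mul_condProb (hp : ∀ z, 0 ≤ p z) (w : W) (x : X) :
    (∑ w', ∑ y, p (w', x, y)) * condProb p E w x =
      ∑ w', ∑ y, if E w y then p (w', x, y) else 0 := by
  refine mul_div_cancel_of_imp' fun h => le_antisymm ?_ ?_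
  · exact (sum_sum_ite_le_sum_sum hp w x).trans h.le
  · exact sum_nonneg fun _ _ => sum_nonneg fun _ _ => by split_ifs <;> simp [hp]

lemma joint_mul_condProb (hp : ∀ z, 0 ≤ p z) {K : X → Y → ℝ}
    (hMarkov : ∀ w x y, p (w, x, y) = (∑ y', p (w, x, y')) * K x y) (w : W) (x : X) :
    (∑ y, p (w, x, y)) * condProb p E w x = ∑ y, if E w y then p (w, x, y) else 0 := by
  have hnum : ∑ w', ∑ y, (if E w y then p (w', x, y) else 0) =
      (∑ w', ∑ y, p (w', x, y)) * ∑ y, if E w y then K x y else 0 := by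
    rw [sum_mul]
    refine sum_congr rfl fun w' _ => ?_
    rw [mul_sum]
    exact sum_congr rfl fun y _ => by rw [mul_ite, mul_zero, ← hMarkov]
  rcases eq_or_ne (∑ w', ∑ y, p (w', x, y)) 0 with h | h
  · have hr : ∑ y, p (w, x, y) = 0 :=
      le_antisymm (h ▸ single_le_sum (f := fun w' => ∑ y, p (w', x, y))
        (fun w' _ => sum_nonneg fun y _ => hp _) (mem_univ w)) (sum_nonneg fun y _ => hp _)
    have hp0 : ∀ y, p (w, x, y) = 0 := fun y => by rw [hMarkov, hr, zero_mul]
    simp [hp0]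
  · rw [condProb, hnum, mul_div_cancel_left₀ _ h, mul_sum]
    exact sum_congr rfl fun y _ => by rw [mul_ite, mul_zero, ← hMarkov]

lemma sum_joint_mul_condProb [Fintype X] (hp : ∀ z, 0 ≤ p z) {K : X → Y → ℝ}
    (hMarkov : ∀ w x y, p (w, x, y) = (∑ y', p (w, x, y')) * K x y) :
    ∑ wx : W × X, (∑ y, p (wx.1, wx.2, y)) * condProb p E wx.1 wx.2 =
      ∑ z : W × X × Y, if E z.1 z.2.2 then p z else 0 := by
  simp only [Fintype.sum_prod_type, joint_mul_condProb hp hMarkov]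

lemma sum_prodMarginals_mul_condProb_le [Fintype X] (hp : IsPMF p) {L : ℝ}
    (hL : ∀ y, ∑ z : W × X × Y, (if E z.1 y then p z else 0) ≤ L) :
    ∑ wx, prodMarginals (fun wx : W × X => ∑ y, p (wx.1, wx.2, y)) wx *
      condProb p E wx.1 wx.2 ≤ L := by
  set PW : W → ℝ := fun w => ∑ x, ∑ y, p (w, x, y)
  set PY : Y → ℝ := fun y => ∑ w, ∑ x, p (w, x, y)
  have hPY : ∑ y, PY y = 1 := by
    rw [← hp.2, Fintype.sum_prod_type]
    simp only [PY, Fintype.sum_prod_type]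
    exact sum_comm.trans (sum_congr rfl fun _ _ => sum_comm)
  have hPW : ∀ y, ∑ z : W × X × Y, (if E z.1 y then p z else 0) =
      ∑ w, if E w y then PW w else 0 := by
    intro y
    simp only [PW, Fintype.sum_prod_type, ite_sum_zero]
  calc ∑ wx, prodMarginals (fun wx : W × X => ∑ y, p (wx.1, wx.2, y)) wx *
        condProb p E wx.1 wx.2
      = ∑ w, PW w * ∑ x, ∑ w', ∑ y, if E w y then p (w', x, y) else 0 := by
        rw [Fintype.sum_prod_type]
        refine sum_congr rfl fun w _ => ?_
        rw [mul_sum]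
        refine sum_congr rfl fun x _ => ?_
        dsimp only [prodMarginals]
        rw [mul_assoc, marginal_mul_condProb hp.1]
    _ = ∑ w, PW w * ∑ y, if E w y then PY y else 0 := by
        simp only [PY, ite_sum_zero]
        exact sum_congr rfl fun w _ => congrArg _
          (sum_comm.trans <| (sum_congr rfl fun _ _ => sum_comm).trans sum_comm)
    _ = ∑ y, PY y * ∑ w, if E w y then PW w else 0 := by
        simp only [mul_sum]
        rw [sum_comm]
        exact sum_congr rfl fun y _ => sum_congr rfl fun w _ => by split_ifs <;> ring
    _ ≤ ∑ y, PY y * L := sum_le_sum fun y _ =>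
        mul_le_mul_of_nonneg_left (hPW y ▸ hL y)
          (sum_nonneg fun _ _ => sum_nonneg fun _ _ => hp.1 _)
    _ = L := by rw [← sum_mul, hPY, one_mul]

end MarkovChain

theorem excess_distortion_lower_bound_general
    {W X : Type*} [Fintype W] [Fintype X] [Nonempty W]
    (p : W × X × W → ℝ) (hp : IsPMF p)
    (K : X → W → ℝ)
    (hMarkov : ∀ w x y, p (w, x, y) = (∑ y', p (w, x, y')) * K x y)
    (ℓ : W → W → ℝ)
    (ρ : ℝ)
    (L : ℝ)
    (hL : L = Finset.univ.sup' Finset.univ_nonempty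
      (fun w' : W => ∑ z : W × X × W, if ℓ z.1 w' ≤ ρ then p z else 0))
    (hL0 : 0 < L) (hL1 : L < 1) :
    (∑ z : W × X × W, if ρ < ℓ z.1 z.2.2 then p z else 0) ≥
      1 - (MI2 (fun wx : W × X => ∑ y, p (wx.1, wx.2, y)) + 1) /
        Real.logb 2 (1 / L) := by
  set r : W × X → ℝ := fun wx => ∑ y, p (wx.1, wx.2, y)
  have hr : IsPMF r :=
    ⟨fun _ => sum_nonneg fun _ _ => hp.1 _, by simp only [r, ← hp.2, Fintype.sum_prod_type]⟩
  have hLy : ∀ y, ∑ z : W × X × W, (if ℓ z.1 y ≤ ρ then p z else 0) ≤ L :=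
    fun y => hL ▸ le_sup' (fun w' : W => ∑ z : W × X × W, if ℓ z.1 w' ≤ ρ then p z else 0)
      (mem_univ y)
  have hsmall := sum_mul_le_KL2_add_one_div_logb hr (isPMF_prodMarginals hr)
    (fun _ => eq_zero_of_prodMarginals_eq_zero hr.1)
    (fun wx => condProb_nonneg (E := fun w y => ℓ w y ≤ ρ) hp.1 wx.1 wx.2)
    (fun wx => condProb_le_one hp.1 wx.1 wx.2)
    (sum_prodMarginals_mul_condProb_le hp hLy) hL0 hL1
  rw [sum_joint_mul_condProb hp.1 hMarkov, ← MI2_eq_KL2_prodMarginals] at hsmall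
  have hcompl : (∑ z : W × X × W, if ρ < ℓ z.1 z.2.2 then p z else 0) =
      1 - ∑ z : W × X × W, if ℓ z.1 z.2.2 ≤ ρ then p z else 0 := by
    rw [← hp.2, ← sum_sub_distrib]
    exact sum_congr rfl fun z _ => by split_ifs <;> linarith
  linarith

/-- Bayes-risk excess-distortion lower bound via mutual information
and small ball probability, for a Markov chain W → X → Ŷ. -/
theorem excess_distortion_lower_bound
    {W X : Type*} [Fintype W] [Fintype X] [Nonempty W]
    (p : W × X × W → ℝ) (hp : IsPMF p)
    (K : X → W → ℝ)
    (hMarkov : ∀ w x y, p (w, x, y) = (∑ y', p (w, x, y')) * K x y)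
    (ℓ : W → W → ℝ) (hℓ : ∀ w w', 0 ≤ ℓ w w')
    (ρ : ℝ) (hρ : 0 < ρ)
    (L : ℝ)
    (hL : L = Finset.univ.sup' Finset.univ_nonempty
      (fun w' : W => ∑ z : W × X × W, if ℓ z.1 w' ≤ ρ then p z else 0))
    (hL0 : 0 < L) (hL1 : L < 1) :
    (∑ z : W × X × W, if ρ < ℓ z.1 z.2.2 then p z else 0) ≥
      1 - (MI2 (fun wx : W × X => ∑ y, p (wx.1, wx.2, y)) + 1) /
        Real.logb 2 (1 / L) :=
  excess_distortion_lower_bound_general p hp K hMarkov ℓ ρ L hL hL0 hL1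
end

section
/- The Dobrushin contraction coefficient of a channel upper bounds its strong data processing constant: for any channel K from a finite set 𝖶 to a finite set 𝖷, η(K) ≤ ϑ(K), where ϑ(K) = max_{w,w'} ‖K(·|w) − K(·|w')‖_TV and η(K) = sup over distinct input distributions μ ≠ ν of D(νK‖μK)/D(ν‖μ). -/
open Finset Real

/-!
Hockey-stick divergences `E_γ(P‖Q) = ∑ (P - γ Q)⁺` contract by the Dobrushin coefficient:
for a signed measure `c` of nonpositive total mass, `∑ₓ (cK)⁺ = (cK)(A)` where `A` is the set
on which `cK` is positive, and the masses `K(A | w)` of `A` under different inputs differ by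
at most `ϑ`. Relative entropy is an integral of hockey-stick divergences over the parameter
`γ`, so integrating the contraction gives the bound.
-/

open MeasureTheory

lemma sum_mul_le_mul_sum_posPart {ι : Type*} [Fintype ι] (c k : ι → ℝ) {θ : ℝ}
    (hk : ∀ i, 0 ≤ k i) (hθ : ∀ i j, k i - k j ≤ θ) (hc : ∑ i, c i ≤ 0) :
    ∑ i, c i * k i ≤ θ * ∑ i, (c i)⁺ := by
  rcases isEmpty_or_nonempty ι with hι | hι
  · simp
  obtain ⟨i₀, -, hi₀⟩ := exists_max_image univ k univ_nonempty
  obtain ⟨i₁, -, hi₁⟩ := exists_min_image univ k univ_nonempty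
  have hpos : 0 ≤ ∑ i, (c i)⁺ := sum_nonneg fun i _ => posPart_nonneg _
  have hpos_le_neg : ∑ i, (c i)⁺ ≤ ∑ i, (c i)⁻ := by
    rw [← sub_nonpos, ← sum_sub_distrib]
    simpa only [posPart_sub_negPart] using hc
  calc ∑ i, c i * k i = ∑ i, ((c i)⁺ * k i - (c i)⁻ * k i) := by
        simp only [← sub_mul, posPart_sub_negPart]
    _ ≤ ∑ i, ((c i)⁺ * k i₀ - (c i)⁻ * k i₁) := by
        gcongr with i
        · exact hi₀ i (mem_univ i)
        · exact hi₁ i (mem_univ i)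
    _ = (∑ i, (c i)⁺) * k i₀ - (∑ i, (c i)⁻) * k i₁ := by
        rw [sum_sub_distrib, sum_mul, sum_mul]
    _ ≤ (∑ i, (c i)⁺) * (k i₀ - k i₁) := by nlinarith [hk i₁]
    _ ≤ θ * ∑ i, (c i)⁺ := by nlinarith [hθ i₀ i₁]

lemma sum_sub_le_half_sum_abs_sub {X : Type*} [Fintype X] {p q : X → ℝ}
    (h : ∑ x, p x = ∑ x, q x) (A : Finset X) :
    ∑ x ∈ A, (p x - q x) ≤ (1 / 2) * ∑ x, |p x - q x| := by
  have htwice : ∑ x, |p x - q x| = 2 * ∑ x, (p x - q x)⁺ := by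
    have hzero : ∑ x, (p x - q x) = 0 := by rw [sum_sub_distrib, h, sub_self]
    calc ∑ x, |p x - q x| = ∑ x, (|p x - q x| + (p x - q x)) := by
          rw [sum_add_distrib, hzero, add_zero]
      _ = 2 * ∑ x, (p x - q x)⁺ := by
          simp only [abs_add_eq_two_nsmul_posPart, nsmul_eq_mul, mul_sum, Nat.cast_ofNat]
  calc ∑ x ∈ A, (p x - q x) ≤ ∑ x ∈ A, (p x - q x)⁺ := sum_le_sum fun x _ => le_posPart _
    _ ≤ ∑ x, (p x - q x)⁺ :=
        sum_le_sum_of_subset_of_nonneg (subset_univ A) fun x _ _ => posPart_nonneg _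
    _ = (1 / 2) * ∑ x, |p x - q x| := by rw [htwice]; ring

lemma push_eq_zero_of_push_eq_zero {W X : Type*} [Fintype W] {K : W → X → ℝ} {μ ν : W → ℝ}
    (hμ : ∀ w, 0 ≤ μ w) (hK : ∀ w x, 0 ≤ K w x) (hac : ∀ w, μ w = 0 → ν w = 0)
    {x : X} (hx : push μ K x = 0) : push ν K x = 0 := by
  have h := (sum_eq_zero_iff_of_nonneg fun w _ => mul_nonneg (hμ w) (hK w x)).1 hx
  refine sum_eq_zero fun w _ => ?_
  rcases mul_eq_zero.1 (h w (mem_univ w)) with h0 | h0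
  · simp [hac w h0]
  · simp [h0]

section Channel

variable {W X : Type*} [Fintype W] [Fintype X] {K : W → X → ℝ} {ϑ : ℝ}

lemma IsPMF.push {μ : W → ℝ} (hμ : IsPMF μ) (hK : ∀ w, IsPMF (K w)) : IsPMF (push μ K) :=
  ⟨fun x => sum_nonneg fun w _ => mul_nonneg (hμ.1 w) ((hK w).1 x), by
    show ∑ x, ∑ w, μ w * K w x = 1
    rw [sum_comm]
    simp only [← mul_sum, (hK _).2, mul_one, hμ.2]⟩

lemma sum_posPart_sum_mul_le (hK : ∀ w, IsPMF (K w))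
    (hϑ : ∀ w w', (1 / 2) * ∑ x, |K w x - K w' x| ≤ ϑ) {c : W → ℝ} (hc : ∑ w, c w ≤ 0) :
    ∑ x, (∑ w, c w * K w x)⁺ ≤ ϑ * ∑ w, (c w)⁺ := by
  set A := univ.filter fun x => 0 < ∑ w, c w * K w x
  have hmass : ∀ w w', (∑ x ∈ A, K w x) - ∑ x ∈ A, K w' x ≤ ϑ := fun w w' => by
    rw [← sum_sub_distrib]
    exact (sum_sub_le_half_sum_abs_sub (by rw [(hK w).2, (hK w').2]) A).trans (hϑ w w')
  calc ∑ x, (∑ w, c w * K w x)⁺ = ∑ x ∈ A, ∑ w, c w * K w x := by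
        rw [sum_filter]
        exact sum_congr rfl fun x _ => posPart_eq_ite_lt
    _ = ∑ w, c w * ∑ x ∈ A, K w x := by
        rw [sum_comm]
        simp only [mul_sum]
    _ ≤ ϑ * ∑ w, (c w)⁺ :=
        sum_mul_le_mul_sum_posPart c _ (fun w => sum_nonneg fun x _ => (hK w).1 x) hmass hc

lemma sum_posPart_push_sub_le (hK : ∀ w, IsPMF (K w))
    (hϑ : ∀ w w', (1 / 2) * ∑ x, |K w x - K w' x| ≤ ϑ) {ρ σ : W → ℝ}
    (hρ : ∑ w, ρ w = 1) (hσ : ∑ w, σ w = 1) {a b : ℝ} (hab : a ≤ b) :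
    ∑ x, (a * push ρ K x - b * push σ K x)⁺ ≤ ϑ * ∑ w, (a * ρ w - b * σ w)⁺ := by
  have hc : ∑ w, (a * ρ w - b * σ w) ≤ 0 := by
    rw [sum_sub_distrib, ← mul_sum, ← mul_sum, hρ, hσ]
    linarith
  convert sum_posPart_sum_mul_le hK hϑ hc using 3 with x
  simp only [push, mul_sum, sub_mul, sum_sub_distrib, mul_assoc]

/-- `∑ₓ klIntegrand (P x) (Q x) γ` is `E_γ(P‖Q) / γ` for `γ ≥ 1` and `E_{1/γ}(Q‖P)` for `γ < 1`. -/
noncomputable def klIntegrand (p q γ : ℝ) : ℝ :=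
  if 1 ≤ γ then (p - γ * q)⁺ / γ else (γ * q - p)⁺ / γ

lemma sum_klIntegrand_push_le (hK : ∀ w, IsPMF (K w))
    (hϑ : ∀ w w', (1 / 2) * ∑ x, |K w x - K w' x| ≤ ϑ)
    {μ ν : W → ℝ} (hμ : ∑ w, μ w = 1) (hν : ∑ w, ν w = 1) {γ : ℝ} (hγ : 0 ≤ γ) :
    ∑ x, klIntegrand (push ν K x) (push μ K x) γ ≤ ϑ * ∑ w, klIntegrand (ν w) (μ w) γ := by
  unfold klIntegrand
  split_ifs with h
  · have := div_le_div_of_nonneg_right (sum_posPart_push_sub_le hK hϑ hν hμ h) hγ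
    simpa only [one_mul, sum_div, mul_div_assoc] using this
  · have := div_le_div_of_nonneg_right
      (sum_posPart_push_sub_le hK hϑ hμ hν (not_le.1 h).le) hγ
    simpa only [one_mul, sum_div, mul_div_assoc] using this

end Channel

lemma klIntegrand_nonneg {p q : ℝ} (hp : 0 ≤ p) (hq : 0 ≤ q) (γ : ℝ) : 0 ≤ klIntegrand p q γ := by
  unfold klIntegrand
  split_ifs with h
  · exact div_nonneg (posPart_nonneg _) (by linarith)
  · rcases le_or_gt γ 0 with hγ | hγ
    · rw [posPart_eq_zero.2 (by nlinarith), zero_div]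
    · exact div_nonneg (posPart_nonneg _) hγ.le

lemma klIntegrand_le {p q : ℝ} (hp : 0 ≤ p) (hq : 0 ≤ q) (γ : ℝ) : klIntegrand p q γ ≤ p + q := by
  unfold klIntegrand
  split_ifs with h
  · calc (p - γ * q)⁺ / γ ≤ p / 1 := by
          gcongr
          exact sup_le (by nlinarith) hp
      _ ≤ p + q := by linarith
  · rcases le_or_gt γ 0 with hγ | hγ
    · rw [posPart_eq_zero.2 (by nlinarith), zero_div]
      positivity
    · calc (γ * q - p)⁺ / γ ≤ γ * q / γ := by
            gcongr
            exact sup_le (by linarith) (by positivity)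
        _ ≤ p + q := by rw [mul_div_cancel_left₀ q hγ.ne']; linarith

lemma intervalIntegrable_klIntegrand {p q : ℝ} (hp : 0 ≤ p) (hq : 0 ≤ q) (a b : ℝ) :
    IntervalIntegrable (klIntegrand p q) volume a b := by
  have hmeas : Measurable (klIntegrand p q) := by
    unfold klIntegrand
    exact Measurable.ite (measurableSet_le measurable_const measurable_id)
      (by fun_prop) (by fun_prop)
  rw [intervalIntegrable_iff]
  refine Measure.integrableOn_of_bounded (M := p + q) measure_Ioc_lt_top.ne
    hmeas.aestronglyMeasurable (ae_of_all _ fun γ => ?_)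
  rw [Real.norm_eq_abs, abs_of_nonneg (klIntegrand_nonneg hp hq γ)]
  exact klIntegrand_le hp hq γ

lemma intervalIntegrable_sum_klIntegrand {α : Type*} [Fintype α] {ρ σ : α → ℝ}
    (hρ : ∀ i, 0 ≤ ρ i) (hσ : ∀ i, 0 ≤ σ i) (a b : ℝ) :
    IntervalIntegrable (fun γ => ∑ i, klIntegrand (ρ i) (σ i) γ) volume a b := by
  simpa only [sum_fn] using
    IntervalIntegrable.sum univ fun i _ => intervalIntegrable_klIntegrand (hρ i) (hσ i) a b

lemma integral_mul_inv_sub {a b : ℝ} (ha : 0 < a) (hb : 0 < b) (p q : ℝ) :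
    ∫ γ in a..b, (p * γ⁻¹ - q) = p * log (b / a) - q * (b - a) := by
  have hinv : IntervalIntegrable (fun γ : ℝ => γ⁻¹) volume a b :=
    intervalIntegral.intervalIntegrable_inv
      (fun γ hγ => (lt_min ha hb |>.trans_le hγ.1).ne') continuousOn_id
  rw [intervalIntegral.integral_sub (hinv.const_mul p) intervalIntegrable_const,
    intervalIntegral.integral_const_mul, integral_inv_of_pos ha hb, intervalIntegral.integral_const,
    smul_eq_mul, mul_comm (b - a)]

section klIntegrand

variable {p q γ : ℝ}

lemma klIntegrand_eq_zero_of_one_le (h1 : 1 ≤ γ) (hp : p ≤ γ * q) : klIntegrand p q γ = 0 := by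
  rw [klIntegrand, if_pos h1, posPart_eq_zero.2 (by linarith), zero_div]

lemma klIntegrand_eq_zero_of_lt_one (h1 : γ < 1) (hp : γ * q ≤ p) : klIntegrand p q γ = 0 := by
  rw [klIntegrand, if_neg (not_le.2 h1), posPart_eq_zero.2 (by linarith), zero_div]

lemma klIntegrand_eq_of_one_le (h1 : 1 ≤ γ) (hp : γ * q ≤ p) :
    klIntegrand p q γ = p * γ⁻¹ - q := by
  rw [klIntegrand, if_pos h1, posPart_eq_self.2 (by linarith)]
  field_simp [(zero_lt_one.trans_le h1).ne']

lemma klIntegrand_eq_of_lt_one (h0 : 0 < γ) (h1 : γ < 1) (hp : p ≤ γ * q) :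
    klIntegrand p q γ = -(p * γ⁻¹ - q) := by
  rw [klIntegrand, if_neg (not_le.2 h1), posPart_eq_self.2 (by linarith)]
  field_simp
  ring

end klIntegrand

lemma integral_klIntegrand {p q M : ℝ} (hp : 0 ≤ p) (hq : 0 ≤ q) (hpq : q = 0 → p = 0)
    (hM : 1 ≤ M) (hpM : p / q ≤ M) :
    ∫ γ in 0..M, klIntegrand p q γ = p * log (p / q) - p + q := by
  rcases hq.eq_or_lt with rfl | hq
  · simp [hpq rfl, klIntegrand]
  set t := p / q with ht_def
  have ht : 0 ≤ t := div_nonneg hp hq.le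
  have htq : t * q = p := div_mul_cancel₀ p hq.ne'
  have hle : ∀ γ, γ * q ≤ p ↔ γ ≤ t := fun γ => (le_div_iff₀ hq).symm
  have hge : ∀ γ, p ≤ γ * q ↔ t ≤ γ := fun γ => (div_le_iff₀ hq).symm
  clear_value t
  have hint : ∀ a b, IntervalIntegrable (klIntegrand p q) volume a b :=
    intervalIntegrable_klIntegrand hp hq.le
  -- the integrand vanishes outside the interval between `t` and `1`
  rcases le_or_gt 1 t with h1t | ht1
  · rw [← intervalIntegral.integral_add_adjacent_intervals (hint 0 1) (hint 1 M),
      ← intervalIntegral.integral_add_adjacent_intervals (hint 1 t) (hint t M),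
      intervalIntegral.integral_congr_Ioo_of_le zero_le_one (g := 0) fun γ hγ =>
        klIntegrand_eq_zero_of_lt_one hγ.2 ((hle γ).2 (hγ.2.le.trans h1t)),
      intervalIntegral.integral_congr_Ioo_of_le h1t fun γ hγ =>
        klIntegrand_eq_of_one_le hγ.1.le ((hle γ).2 hγ.2.le),
      intervalIntegral.integral_congr_Ioo_of_le hpM (g := 0) fun γ hγ =>
        klIntegrand_eq_zero_of_one_le (h1t.trans hγ.1.le) ((hge γ).2 hγ.1.le),
      integral_mul_inv_sub one_pos (by linarith), div_one]
    simp only [intervalIntegral.integral_zero, Pi.zero_apply]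
    linear_combination -htq
  · have hmiddle : ∫ γ in t..1, (p * γ⁻¹ - q) = -(p * log t) - q * (1 - t) := by
      rcases hp.eq_or_lt with rfl | hp
      · simp [ht_def]
      · rw [integral_mul_inv_sub (ht_def ▸ div_pos hp hq) one_pos, one_div, log_inv, mul_neg]
    rw [← intervalIntegral.integral_add_adjacent_intervals (hint 0 t) (hint t M),
      ← intervalIntegral.integral_add_adjacent_intervals (hint t 1) (hint 1 M),
      intervalIntegral.integral_congr_Ioo_of_le ht (g := 0) fun γ hγ =>
        klIntegrand_eq_zero_of_lt_one (hγ.2.trans ht1) ((hle γ).2 hγ.2.le),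
      intervalIntegral.integral_congr_Ioo_of_le ht1.le fun γ hγ =>
        klIntegrand_eq_of_lt_one (ht.trans_lt hγ.1) hγ.2 ((hge γ).2 hγ.1.le),
      intervalIntegral.integral_congr_Ioo_of_le hM (g := 0) fun γ hγ =>
        klIntegrand_eq_zero_of_one_le hγ.1.le ((hge γ).2 (ht1.trans hγ.1).le),
      intervalIntegral.integral_neg, hmiddle]
    simp only [intervalIntegral.integral_zero, Pi.zero_apply]
    linear_combination -htq

lemma integral_sum_klIntegrand {α : Type*} [Fintype α] {ρ σ : α → ℝ} (hρ : IsPMF ρ)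
    (hσ : IsPMF σ) (hac : ∀ i, σ i = 0 → ρ i = 0) {M : ℝ} (hM : 1 ≤ M)
    (hρM : ∀ i, ρ i / σ i ≤ M) :
    ∫ γ in 0..M, ∑ i, klIntegrand (ρ i) (σ i) γ = log 2 * KL2 ρ σ := by
  rw [intervalIntegral.integral_finsetSum fun i _ =>
      intervalIntegrable_klIntegrand (hρ.1 i) (hσ.1 i) 0 M,
    sum_congr rfl fun i _ => integral_klIntegrand (hρ.1 i) (hσ.1 i) (hac i) hM (hρM i),
    sum_add_distrib, sum_sub_distrib, hρ.2, hσ.2, sub_add_cancel, KL2, mul_sum]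
  refine sum_congr rfl fun i _ => ?_
  rw [logb, mul_div_assoc', mul_div_cancel₀ _ (log_pos one_lt_two).ne']

theorem dobrushin_bounds_sdpi_general
    {W X : Type*} [Fintype W] [Fintype X]
    (K : W → X → ℝ) (hK : ∀ w, IsPMF (K w))
    (ϑ : ℝ)
    (hϑ : ∀ w w', (1/2) * ∑ x, |K w x - K w' x| ≤ ϑ)
    (μ ν : W → ℝ) (hμ : IsPMF μ) (hν : IsPMF ν)
    (hac : ∀ w, μ w = 0 → ν w = 0) :
    KL2 (push ν K) (push μ K) ≤ ϑ * KL2 ν μ := by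
  obtain ⟨M, hM, hνμ, hPQ⟩ : ∃ M, 1 ≤ M ∧ (∀ w, ν w / μ w ≤ M) ∧
      ∀ x, push ν K x / push μ K x ≤ M := by
    obtain ⟨M₁, hM₁⟩ := (Set.finite_range fun w => ν w / μ w).bddAbove
    obtain ⟨M₂, hM₂⟩ := (Set.finite_range fun x => push ν K x / push μ K x).bddAbove
    exact ⟨max 1 (max M₁ M₂), le_max_left _ _,
      fun w => (hM₁ ⟨w, rfl⟩).trans ((le_max_left _ _).trans (le_max_right _ _)),
      fun x => (hM₂ ⟨x, rfl⟩).trans ((le_max_right _ _).trans (le_max_right _ _))⟩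
  have hP := hν.push hK
  have hQ := hμ.push hK
  have hcontract := intervalIntegral.integral_mono_on (zero_le_one.trans hM)
    (intervalIntegrable_sum_klIntegrand hP.1 hQ.1 0 M)
    ((intervalIntegrable_sum_klIntegrand hν.1 hμ.1 0 M).const_mul ϑ)
    fun γ hγ => sum_klIntegrand_push_le hK hϑ hμ.2 hν.2 hγ.1
  rw [intervalIntegral.integral_const_mul, integral_sum_klIntegrand hν hμ hac hM hνμ,
    integral_sum_klIntegrand hP hQ
      (fun x => push_eq_zero_of_push_eq_zero hμ.1 (fun w => (hK w).1) hac) hM hPQ,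
    mul_left_comm] at hcontract
  exact le_of_mul_le_mul_left hcontract (log_pos one_lt_two)

/-- the Dobrushin contraction coefficient upper-bounds the SDPI constant:
for any ϑ dominating all pairwise total variations of the channel rows (in particular the
maximum, i.e. the Dobrushin coefficient), the relative-entropy contraction ratio is ≤ ϑ. -/
theorem dobrushin_bounds_sdpi
    {W X : Type*} [Fintype W] [Fintype X]
    (K : W → X → ℝ) (hK : ∀ w, IsPMF (K w))
    (ϑ : ℝ)
    (hϑ : ∀ w w', (1/2) * ∑ x, |K w x - K w' x| ≤ ϑ)
    (μ ν : W → ℝ) (hμ : IsPMF μ) (hν : IsPMF ν)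
    (hac : ∀ w, μ w = 0 → ν w = 0) (hpos : 0 < KL2 ν μ) :
    KL2 (push ν K) (push μ K) ≤ ϑ * KL2 ν μ :=
  dobrushin_bounds_sdpi_general K hK ϑ hϑ μ ν hμ hν hac
end

section
/- Tensorization of the SDPI constant: for input distributions μ₁,…,μ_n on finite sets and channels K₁,…,K_n, the SDPI constant of the product satisfies η(μ₁⊗⋯⊗μ_n, K₁⊗⋯⊗K_n) = max_{1≤i≤n} η(μ_i, K_i). -/
open Finset Real

/-!
The product constant is at least each `η(μᵢ, Kᵢ)`: perturbing one factor,
`ν = μ₁ ⊗ ⋯ ⊗ νᵢ ⊗ ⋯ ⊗ μₙ`, gives the same input and output divergences as `νᵢ` against `μᵢ`.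

It is at most their maximum `M`: by induction on `n` it suffices to show that the SDPI with
constant `M` for `(μ₁, K₁)` and `(μ₂, K₂)` gives it for `(μ₁ ⊗ μ₂, K₁ ⊗ K₂)`. Let `ν₁` be the
first marginal of `ν` and `P = ν(K₁ ⊗ K₂)`. By the chain rule
`D(P ‖ μ₁K₁ ⊗ μ₂K₂) = D(ν₁K₁ ‖ μ₁K₁) + D(P ‖ ν₁K₁ ⊗ μ₂K₂)`.
The first term is at most `M D(ν₁ ‖ μ₁)`. The second is an average over the first output `y₁`
of divergences after `K₂` of the conditional law of the second input given `y₁`, so it is at most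
`M D(m ‖ ν₁K₁ ⊗ μ₂)` for the joint law `m = ν(K₁ ⊗ id)` of the first output and the second input;
by data processing through `K₁ ⊗ id` this is at most `M D(ν ‖ ν₁ ⊗ μ₂)`. The chain rule for `ν`
adds the two bounds up to `M D(ν ‖ μ₁ ⊗ μ₂)`.
-/

lemma log_sum_inequality {ι : Type*} (s : Finset ι) {a b : ι → ℝ}
    (ha : ∀ i ∈ s, 0 ≤ a i) (hb : ∀ i ∈ s, 0 ≤ b i) (hab : ∀ i ∈ s, b i = 0 → a i = 0) :
    (∑ i ∈ s, a i) * logb 2 ((∑ i ∈ s, a i) / ∑ i ∈ s, b i) ≤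
      ∑ i ∈ s, a i * logb 2 (a i / b i) := by
  rcases (sum_nonneg hb).eq_or_lt with hB | hB
  · have ha0 : ∀ i ∈ s, a i = 0 := fun i hi =>
      hab i hi ((sum_eq_zero_iff_of_nonneg hb).1 hB.symm i hi)
    simp only [sum_congr rfl ha0, sum_const_zero, zero_mul]
    exact sum_nonneg fun i hi => by rw [ha0 i hi, zero_mul]
  have hφ : ConvexOn ℝ (Set.Ici 0) fun t : ℝ => t * logb 2 t :=
    (convexOn_mul_log.smul (inv_nonneg.2 (log_nonneg one_le_two))).congr fun t _ => by
      simp only [smul_eq_mul, logb]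
      ring
  have hweight : ∀ i ∈ s, ∀ c : ℝ,
      b i / (∑ j ∈ s, b j) * (a i / b i * c) = a i * c / ∑ j ∈ s, b j := by
    intro i hi c
    rcases eq_or_ne (b i) 0 with h | h
    · simp [h, hab i hi h]
    · field_simp
  -- Jensen for `t ↦ t logb t` with weights `b i / ∑ b` at the points `a i / b i`
  have hjensen := hφ.map_sum_le (t := s) (w := fun i => b i / ∑ j ∈ s, b j)
    (p := fun i => a i / b i) (fun i hi => div_nonneg (hb i hi) hB.le)
    (by rw [← sum_div, div_self hB.ne']) (fun i hi => div_nonneg (ha i hi) (hb i hi))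
  simp only [smul_eq_mul] at hjensen
  rw [sum_congr rfl fun i hi => hweight i hi _, sum_congr rfl fun i hi => by
    simpa using hweight i hi 1, ← sum_div, ← sum_div, le_div_iff₀ hB] at hjensen
  calc (∑ i ∈ s, a i) * logb 2 ((∑ i ∈ s, a i) / ∑ i ∈ s, b i)
      = (∑ i ∈ s, a i) / (∑ i ∈ s, b i) * logb 2 ((∑ i ∈ s, a i) / ∑ i ∈ s, b i) *
          ∑ i ∈ s, b i := by field_simp
    _ ≤ _ := hjensen

section Basics

variable {α β : Type*} [Fintype α]

lemma KL2_nonneg {p q : α → ℝ} (hp : IsPMF p) (hq : IsPMF q)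
    (hac : ∀ x, q x = 0 → p x = 0) : 0 ≤ KL2 p q := by
  have h := log_sum_inequality univ (fun x _ => hp.1 x) (fun x _ => hq.1 x) fun x _ => hac x
  rw [hp.2, hq.2] at h
  simpa [KL2] using h

@[simp]
lemma KL2_self (p : α → ℝ) : KL2 p p = 0 :=
  sum_eq_zero fun x _ => by by_cases h : p x = 0 <;> simp [h]

lemma KL2_smul (c : ℝ) (p q : α → ℝ) : KL2 (c • p) (c • q) = c * KL2 p q := by
  simp only [KL2, mul_sum]
  refine sum_congr rfl fun x _ => ?_
  rcases eq_or_ne c 0 with rfl | hc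
  · simp
  · simp only [Pi.smul_apply, smul_eq_mul, mul_div_mul_left _ _ hc]
    ring

lemma push_nonneg {μ : α → ℝ} {K : α → β → ℝ} (hμ : ∀ x, 0 ≤ μ x)
    (hK : ∀ x y, 0 ≤ K x y) (y : β) : 0 ≤ push μ K y :=
  sum_nonneg fun x _ => mul_nonneg (hμ x) (hK x y)

lemma push_isPMF [Fintype β] {μ : α → ℝ} {K : α → β → ℝ} (hμ : IsPMF μ)
    (hK : ∀ x, IsPMF (K x)) : IsPMF (push μ K) := by
  refine ⟨push_nonneg hμ.1 fun x => (hK x).1, ?_⟩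
  simp only [push]
  rw [sum_comm]
  simp [← mul_sum, (hK _).2, hμ.2]

lemma push_smul (c : ℝ) (μ : α → ℝ) (K : α → β → ℝ) : push (c • μ) K = c • push μ K := by
  ext y
  simp [push, mul_sum, mul_assoc]

lemma push_eq_zero_of_absCont {μ ν : α → ℝ} {K : α → β → ℝ} (hμ : ∀ x, 0 ≤ μ x)
    (hK : ∀ x y, 0 ≤ K x y) (hac : ∀ x, μ x = 0 → ν x = 0) {y : β}
    (hy : push μ K y = 0) : push ν K y = 0 := by
  refine sum_eq_zero fun x _ => ?_
  rcases mul_eq_zero.1 ((sum_eq_zero_iff_of_nonneg fun x _ => mul_nonneg (hμ x) (hK x y)).1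
    hy x (mem_univ x)) with h | h
  · simp [hac x h]
  · simp [h]

lemma KL2_push_le [Fintype β] {μ ν : α → ℝ} {K : α → β → ℝ} (hμ : ∀ x, 0 ≤ μ x)
    (hν : ∀ x, 0 ≤ ν x) (hK : ∀ x, IsPMF (K x)) (hac : ∀ x, μ x = 0 → ν x = 0) :
    KL2 (push ν K) (push μ K) ≤ KL2 ν μ := by
  have hcancel : ∀ x y, ν x * K x y * logb 2 (ν x * K x y / (μ x * K x y)) =
      ν x * logb 2 (ν x / μ x) * K x y := by
    intro x y
    rcases eq_or_ne (K x y) 0 with h | h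
    · simp [h]
    · rw [mul_div_mul_right _ _ h]
      ring
  calc KL2 (push ν K) (push μ K)
      ≤ ∑ y, ∑ x, ν x * K x y * logb 2 (ν x * K x y / (μ x * K x y)) :=
        sum_le_sum fun y _ => log_sum_inequality univ
          (fun x _ => mul_nonneg (hν x) ((hK x).1 y)) (fun x _ => mul_nonneg (hμ x) ((hK x).1 y))
          fun x _ h => by
            rcases mul_eq_zero.1 h with h | h <;> simp [h, hac]
    _ = KL2 ν μ := by
        simp only [hcancel]
        rw [sum_comm]
        simp [KL2, ← mul_sum, (hK _).2]

end Basics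

section SDPI

variable {α β : Type*} [Fintype α] [Fintype β] {μ : α → ℝ} {K : α → β → ℝ}

lemma div_le_etaAt (hμ : ∀ x, 0 ≤ μ x) (hK : ∀ x, IsPMF (K x)) {ν : α → ℝ} (hν : IsPMF ν)
    (hac : ∀ x, μ x = 0 → ν x = 0) (hpos : 0 < KL2 ν μ) :
    KL2 (push ν K) (push μ K) / KL2 ν μ ≤ etaAt μ K := by
  refine le_csSup ⟨1, ?_⟩ ⟨ν, hν, hac, hpos, rfl⟩
  rintro _ ⟨ν', hν', hac', hpos', rfl⟩
  exact (div_le_one hpos').2 (KL2_push_le hμ hν'.1 hK hac')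

lemma etaAt_le {M : ℝ} (hM : 0 ≤ M)
    (h : ∀ ν, IsPMF ν → (∀ x, μ x = 0 → ν x = 0) → 0 < KL2 ν μ →
      KL2 (push ν K) (push μ K) / KL2 ν μ ≤ M) :
    etaAt μ K ≤ M :=
  Real.sSup_le (by rintro _ ⟨ν, hν, hac, hpos, rfl⟩; exact h ν hν hac hpos) hM

lemma etaAt_nonneg (hμ : IsPMF μ) (hK : ∀ x, IsPMF (K x)) : 0 ≤ etaAt μ K := by
  refine Real.sSup_nonneg ?_
  rintro _ ⟨ν, hν, hac, hpos, rfl⟩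
  have := KL2_nonneg (push_isPMF hν hK) (push_isPMF hμ hK)
    fun y => push_eq_zero_of_absCont hμ.1 (fun x => (hK x).1) hac
  positivity

variable (μ K) in
def SatisfiesSDPI (M : ℝ) : Prop :=
  ∀ ν : α → ℝ, IsPMF ν → (∀ x, μ x = 0 → ν x = 0) → KL2 (push ν K) (push μ K) ≤ M * KL2 ν μ

lemma satisfiesSDPI_etaAt (hμ : IsPMF μ) (hK : ∀ x, IsPMF (K x)) :
    SatisfiesSDPI μ K (etaAt μ K) := by
  intro ν hν hac
  rcases (KL2_nonneg hν hμ hac).eq_or_lt with h0 | hpos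
  · rw [← h0, mul_zero, h0]
    exact KL2_push_le hμ.1 hν.1 hK hac
  · exact (div_le_iff₀ hpos).1 (div_le_etaAt hμ.1 hK hν hac hpos)

namespace SatisfiesSDPI

variable {c M : ℝ}

lemma mono (hμ : IsPMF μ) (h : SatisfiesSDPI μ K c) (hcM : c ≤ M) : SatisfiesSDPI μ K M :=
  fun ν hν hac => (h ν hν hac).trans (mul_le_mul_of_nonneg_right hcM (KL2_nonneg hν hμ hac))

lemma etaAt_le (hM : 0 ≤ M) (h : SatisfiesSDPI μ K M) : etaAt μ K ≤ M :=
  _root_.etaAt_le hM fun ν hν hac hpos => (div_le_iff₀ hpos).2 (h ν hν hac)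

lemma KL2_push_le_of_nonneg (h : SatisfiesSDPI μ K M) {ρ : α → ℝ} (hρ : ∀ x, 0 ≤ ρ x)
    (hac : ∀ x, μ x = 0 → ρ x = 0) :
    KL2 (push ρ K) ((∑ x, ρ x) • push μ K) ≤ M * KL2 ρ ((∑ x, ρ x) • μ) := by
  rcases (sum_nonneg fun x (_ : x ∈ univ) => hρ x).eq_or_lt with h0 | hpos
  · have : ρ = 0 := funext fun x => (sum_eq_zero_iff_of_nonneg fun x _ => hρ x).1 h0.symm x
      (mem_univ x)
    subst this
    simp [push, KL2]
  set c := ∑ x, ρ x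
  have hρc : ρ = c • c⁻¹ • ρ := by rw [smul_smul, mul_inv_cancel₀ hpos.ne', one_smul]
  have hν : IsPMF (c⁻¹ • ρ) :=
    ⟨fun x => mul_nonneg (inv_nonneg.2 hpos.le) (hρ x), by
      simp [← mul_sum, c, inv_mul_cancel₀ hpos.ne']⟩
  have := h _ hν fun x hx => by simp [hac x hx]
  rw [hρc, push_smul, KL2_smul, KL2_smul]
  nlinarith

lemma comp_equiv {α' β' : Type*} [Fintype α'] [Fintype β'] (h : SatisfiesSDPI μ K M)
    (e : α' ≃ α) (f : β' ≃ β) :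
    SatisfiesSDPI (μ ∘ e) (fun x y => K (e x) (f y)) M := by
  intro ν hν hac
  have hKL : ∀ p q : α' → ℝ, KL2 p q = KL2 (p ∘ e.symm) (q ∘ e.symm) := fun p q =>
    (Fintype.sum_equiv e.symm _ _ fun x => by simp).symm
  have hpush : ∀ p : α' → ℝ, push p (fun x y => K (e x) (f y)) = push (p ∘ e.symm) K ∘ f :=
    fun p => funext fun y => Fintype.sum_equiv e _ _ fun x => by simp
  have hKL' : ∀ p q : β → ℝ, KL2 (p ∘ f) (q ∘ f) = KL2 p q := fun p q =>
    Fintype.sum_equiv f _ _ fun y => rfl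
  rw [hpush, hpush, hKL', hKL ν]
  convert h (ν ∘ e.symm)
    ⟨fun x => hν.1 _, (Fintype.sum_equiv e.symm _ _ fun _ => rfl).trans hν.2⟩
    (fun x hx => hac _ (by simpa using hx)) using 3 <;> ext x <;> simp

end SatisfiesSDPI

end SDPI

section Product

variable {α₁ α₂ β₁ β₂ : Type*}

def prodDist (p : α₁ → ℝ) (q : α₂ → ℝ) : α₁ × α₂ → ℝ := fun z => p z.1 * q z.2

def prodChannel (K₁ : α₁ → β₁ → ℝ) (K₂ : α₂ → β₂ → ℝ) : α₁ × α₂ → β₁ × β₂ → ℝ :=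
  fun x => prodDist (K₁ x.1) (K₂ x.2)

def idChannel [DecidableEq α₁] : α₁ → α₁ → ℝ := fun x y => if x = y then 1 else 0

lemma prodDist_nonneg {p : α₁ → ℝ} {q : α₂ → ℝ} (hp : ∀ a, 0 ≤ p a) (hq : ∀ b, 0 ≤ q b)
    (z : α₁ × α₂) : 0 ≤ prodDist p q z :=
  mul_nonneg (hp z.1) (hq z.2)

variable [Fintype α₂]

def fstMarginal (p : α₁ × α₂ → ℝ) : α₁ → ℝ := fun a => ∑ b, p (a, b)

lemma absCont_prodDist_fstMarginal {p : α₁ × α₂ → ℝ} {q₁ : α₁ → ℝ} {q₂ : α₂ → ℝ}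
    (hp : ∀ z, 0 ≤ p z) (hac : ∀ z, prodDist q₁ q₂ z = 0 → p z = 0) :
    ∀ z, prodDist (fstMarginal p) q₂ z = 0 → p z = 0 := by
  intro z hz
  rcases mul_eq_zero.1 hz with hz | hz
  · exact (sum_eq_zero_iff_of_nonneg fun b _ => hp _).1 hz z.2 (mem_univ _)
  · exact hac z (by simp [prodDist, hz])

variable [Fintype α₁]

lemma isPMF_prodDist {p : α₁ → ℝ} {q : α₂ → ℝ} (hp : IsPMF p) (hq : IsPMF q) :
    IsPMF (prodDist p q) :=
  ⟨prodDist_nonneg hp.1 hq.1, by simp [prodDist, Fintype.sum_prod_type, ← mul_sum, hp.2, hq.2]⟩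

lemma isPMF_fstMarginal {p : α₁ × α₂ → ℝ} (hp : IsPMF p) : IsPMF (fstMarginal p) :=
  ⟨fun a => sum_nonneg fun b _ => hp.1 _, by rw [← hp.2, Fintype.sum_prod_type]; rfl⟩

lemma isPMF_idChannel [DecidableEq α₁] (x : α₁) : IsPMF (idChannel x) :=
  ⟨fun y => by unfold idChannel; split_ifs <;> norm_num, by simp [idChannel]⟩

lemma push_idChannel [DecidableEq α₁] (p : α₁ → ℝ) : push p idChannel = p := by
  ext
  simp [push, idChannel]

lemma push_prodDist (p : α₁ → ℝ) (q : α₂ → ℝ) (K₁ : α₁ → β₁ → ℝ) (K₂ : α₂ → β₂ → ℝ) :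
    push (prodDist p q) (prodChannel K₁ K₂) = prodDist (push p K₁) (push q K₂) := by
  ext y
  simp only [push, prodChannel, prodDist, Fintype.sum_prod_type, sum_mul_sum]
  exact sum_congr rfl fun _ _ => sum_congr rfl fun _ _ => by ring

lemma fstMarginal_push_prodChannel [Fintype β₂] (ν : α₁ × α₂ → ℝ) (K₁ : α₁ → β₁ → ℝ)
    {K₂ : α₂ → β₂ → ℝ} (hK₂ : ∀ x, IsPMF (K₂ x)) :
    fstMarginal (push ν (prodChannel K₁ K₂)) = push (fstMarginal ν) K₁ := by
  ext y
  simp only [fstMarginal, push, prodChannel, prodDist]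
  rw [sum_comm]
  simp only [← mul_sum, ← mul_assoc, (hK₂ _).2, mul_one, Fintype.sum_prod_type, sum_mul]

lemma push_row_push_prodChannel_idChannel [DecidableEq α₂] (ν : α₁ × α₂ → ℝ)
    (K₁ : α₁ → β₁ → ℝ) (K₂ : α₂ → β₂ → ℝ) (y : β₁ × β₂) :
    push (fun a => push ν (prodChannel K₁ idChannel) (y.1, a)) K₂ y.2 =
      push ν (prodChannel K₁ K₂) y := by
  simp only [push, prodChannel, prodDist, idChannel, sum_mul]
  rw [sum_comm]
  simp [mul_assoc]

lemma KL2_prodDist_eq {p : α₁ × α₂ → ℝ} {q₁ : α₁ → ℝ} {q₂ : α₂ → ℝ} (hp : ∀ z, 0 ≤ p z)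
    (hac : ∀ z, prodDist q₁ q₂ z = 0 → p z = 0) :
    KL2 p (prodDist q₁ q₂) = KL2 (fstMarginal p) q₁ + KL2 p (prodDist (fstMarginal p) q₂) := by
  have hfst : KL2 (fstMarginal p) q₁ =
      ∑ z, p z * logb 2 (fstMarginal p z.1 / q₁ z.1) := by
    simp only [KL2, fstMarginal, Fintype.sum_prod_type, sum_mul]
  rw [hfst, KL2, KL2, ← sum_add_distrib]
  refine sum_congr rfl fun z _ => ?_
  rcases (hp z).eq_or_lt with hz | hz
  · simp [← hz]
  have hq : q₁ z.1 ≠ 0 ∧ q₂ z.2 ≠ 0 := by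
    simpa [prodDist, not_or] using mt (hac z) hz.ne'
  have hmarg : 0 < fstMarginal p z.1 :=
    hz.trans_le (single_le_sum (fun b _ => hp (z.1, b)) (mem_univ z.2))
  simp only [prodDist]
  rw [← mul_add, ← logb_mul (div_ne_zero hmarg.ne' hq.1)
    (div_ne_zero hz.ne' (mul_ne_zero hmarg.ne' hq.2))]
  congr 2
  field_simp

lemma KL2_prodDist_eq_sum (p : α₁ × α₂ → ℝ) (r : α₁ → ℝ) (q : α₂ → ℝ) :
    KL2 p (prodDist r q) = ∑ a, KL2 (fun b => p (a, b)) (r a • q) := by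
  simp [KL2, prodDist, Fintype.sum_prod_type]

end Product

section TensorPair

variable {α₁ α₂ β₁ β₂ γ : Type*} [Fintype α₁] [Fintype α₂] [Fintype β₁] [Fintype β₂]
  [Fintype γ] {M : ℝ}

lemma SatisfiesSDPI.KL2_push_snd_le {μ : α₂ → ℝ} {K : α₂ → β₂ → ℝ} (h : SatisfiesSDPI μ K M)
    {m : γ × α₂ → ℝ} (hm : ∀ z, 0 ≤ m z) (hac : ∀ z, μ z.2 = 0 → m z = 0) :
    KL2 (fun z : γ × β₂ => push (fun a => m (z.1, a)) K z.2)
        (prodDist (fstMarginal m) (push μ K)) ≤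
      M * KL2 m (prodDist (fstMarginal m) μ) := by
  rw [KL2_prodDist_eq_sum, KL2_prodDist_eq_sum, mul_sum]
  exact sum_le_sum fun c _ =>
    h.KL2_push_le_of_nonneg (fun a => hm (c, a)) fun a ha => hac (c, a) ha

lemma SatisfiesSDPI.prod (hM : 0 ≤ M) {μ₁ : α₁ → ℝ} {μ₂ : α₂ → ℝ}
    {K₁ : α₁ → β₁ → ℝ} {K₂ : α₂ → β₂ → ℝ} (hμ₁ : ∀ a, 0 ≤ μ₁ a) (hμ₂ : ∀ a, 0 ≤ μ₂ a)
    (hK₁ : ∀ x, IsPMF (K₁ x)) (hK₂ : ∀ x, IsPMF (K₂ x))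
    (h₁ : SatisfiesSDPI μ₁ K₁ M) (h₂ : SatisfiesSDPI μ₂ K₂ M) :
    SatisfiesSDPI (prodDist μ₁ μ₂) (prodChannel K₁ K₂) M := by
  classical
  intro ν hν hac
  set ν₁ := fstMarginal ν
  -- the joint law of the first output and the second input
  set m := push ν (prodChannel K₁ (idChannel : α₂ → α₂ → ℝ))
  have hν₁ : IsPMF ν₁ := isPMF_fstMarginal hν
  have hac₁ : ∀ a, μ₁ a = 0 → ν₁ a = 0 := fun a ha =>
    sum_eq_zero fun b _ => hac (a, b) (by simp [prodDist, ha])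
  have hacν₁ := absCont_prodDist_fstMarginal hν.1 hac
  have hm₁ : fstMarginal m = push ν₁ K₁ :=
    fstMarginal_push_prodChannel ν K₁ isPMF_idChannel
  have hP₁ : fstMarginal (push ν (prodChannel K₁ K₂)) = push ν₁ K₁ :=
    fstMarginal_push_prodChannel ν K₁ hK₂
  have hP : push ν (prodChannel K₁ K₂) = fun z => push (fun a => m (z.1, a)) K₂ z.2 :=
    funext fun z => (push_row_push_prodChannel_idChannel ν K₁ K₂ z).symm
  have hK : ∀ x, IsPMF (prodChannel K₁ (idChannel : α₂ → α₂ → ℝ) x) := fun x =>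
    isPMF_prodDist (hK₁ x.1) (isPMF_idChannel x.2)
  calc KL2 (push ν (prodChannel K₁ K₂)) (push (prodDist μ₁ μ₂) (prodChannel K₁ K₂))
      = KL2 (push ν₁ K₁) (push μ₁ K₁) +
          KL2 (push ν (prodChannel K₁ K₂)) (prodDist (push ν₁ K₁) (push μ₂ K₂)) := by
        have hK₁₂ : ∀ x y, 0 ≤ prodChannel K₁ K₂ x y := fun x =>
          prodDist_nonneg (hK₁ x.1).1 (hK₂ x.2).1
        rw [push_prodDist, KL2_prodDist_eq (push_nonneg hν.1 hK₁₂) fun z hz =>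
          push_eq_zero_of_absCont (prodDist_nonneg hμ₁ hμ₂) hK₁₂ hac (by rwa [push_prodDist]),
          hP₁]
    _ ≤ M * KL2 ν₁ μ₁ + M * KL2 m (prodDist (push ν₁ K₁) μ₂) := by
        refine add_le_add (h₁ ν₁ hν₁ hac₁) ?_
        rw [hP, ← hm₁]
        refine h₂.KL2_push_snd_le (push_nonneg hν.1 fun x => (hK x).1) fun z hz => ?_
        refine push_eq_zero_of_absCont (prodDist_nonneg hν₁.1 hμ₂) (fun x => (hK x).1) hacν₁ ?_
        simp [push_prodDist, push_idChannel, prodDist, hz]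
    _ ≤ M * KL2 ν₁ μ₁ + M * KL2 ν (prodDist ν₁ μ₂) := by
        have hdpi := KL2_push_le (prodDist_nonneg hν₁.1 hμ₂) hν.1 hK hacν₁
        rw [push_prodDist, push_idChannel] at hdpi
        gcongr
    _ = M * KL2 ν (prodDist μ₁ μ₂) := by
        rw [KL2_prodDist_eq (q₁ := μ₁) hν.1 hac]
        ring

end TensorPair

section Pi

open Function

variable {ι : Type*} [Fintype ι] [DecidableEq ι]

lemma prod_apply_update {M : Type*} [CommMonoid M] {κ : ι → Type*} (F : ∀ j, κ j → M)
    (q : ∀ j, κ j) (i : ι) (v : κ i) :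
    ∏ j, F j (update q i v j) = F i v * ∏ j ∈ {i}ᶜ, F j (q j) := by
  simp_rw [apply_update F, Fintype.prod_eq_mul_prod_compl i, update_self]
  congr 1
  exact prod_congr rfl fun j hj => update_of_ne (by simpa using hj) _ _

variable {α β : ι → Type*} [∀ i, Fintype (α i)]

lemma isPMF_pi {p : ∀ i, α i → ℝ} (hp : ∀ i, IsPMF (p i)) :
    IsPMF fun x : ∀ i, α i => ∏ i, p i (x i) :=
  ⟨fun x => prod_nonneg fun i _ => (hp i).1 _, by simp [← Fintype.prod_sum, (hp _).2]⟩

lemma push_pi (p : ∀ i, α i → ℝ) (K : ∀ i, α i → β i → ℝ) :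
    push (fun x : ∀ i, α i => ∏ i, p i (x i))
      (fun (x : ∀ i, α i) (y : ∀ i, β i) => ∏ i, K i (x i) (y i)) =
      fun y => ∏ i, push (p i) (K i) (y i) := by
  ext y
  simp only [push, Fintype.prod_sum, ← prod_mul_distrib]

lemma KL2_pi_update (q : ∀ i, α i → ℝ) (i : ι) (hq : ∀ j ≠ i, ∑ a, q j a = 1)
    (p : α i → ℝ) :
    KL2 (fun x : ∀ j, α j => ∏ j, update q i p j (x j)) (fun x => ∏ j, q j (x j)) =
      KL2 p (q i) := by
  let g : α i → ℝ := fun a => p a * logb 2 (p a / q i a)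
  have hterm : ∀ x : ∀ j, α j, (∏ j, update q i p j (x j)) *
      logb 2 ((∏ j, update q i p j (x j)) / ∏ j, q j (x j)) = ∏ j, update q i g j (x j) := by
    intro x
    rw [prod_apply_update (fun j (f : α j → ℝ) => f (x j)) q i p,
      prod_apply_update (fun j (f : α j → ℝ) => f (x j)) q i g, Fintype.prod_eq_mul_prod_compl i]
    rcases eq_or_ne (∏ j ∈ {i}ᶜ, q j (x j)) 0 with h | h
    · simp [h]
    · rw [mul_div_mul_right _ _ h]
      ring
  simp only [KL2, hterm, ← Fintype.prod_sum]
  rw [prod_apply_update (fun j (f : α j → ℝ) => ∑ a, f a) q i g,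
    prod_eq_one fun j hj => hq j (by simpa using hj), mul_one]

lemma etaAt_le_etaAt_pi [∀ i, Fintype (β i)] {μ : ∀ i, α i → ℝ} {K : ∀ i, α i → β i → ℝ}
    (hμ : ∀ i, IsPMF (μ i)) (hK : ∀ i x, IsPMF (K i x)) (i : ι) :
    etaAt (μ i) (K i) ≤ etaAt (fun x : ∀ i, α i => ∏ i, μ i (x i))
      (fun (x : ∀ i, α i) (y : ∀ i, β i) => ∏ i, K i (x i) (y i)) := by
  refine etaAt_le (etaAt_nonneg (isPMF_pi hμ) fun x => isPMF_pi fun i => hK i (x i)) ?_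
  intro ν hν hac hpos
  have hupdate : ∀ j, IsPMF (update μ i ν j) := by
    intro j
    rcases eq_or_ne j i with rfl | hj <;> simp [*]
  have hpush : ∀ j, push (update μ i ν j) (K j) =
      update (fun j => push (μ j) (K j)) i (push ν (K i)) j :=
    apply_update (fun j p => push p (K j)) μ i ν
  have hKL : KL2 (fun x : ∀ j, α j => ∏ j, update μ i ν j (x j)) (fun x => ∏ j, μ j (x j))
      = KL2 ν (μ i) := KL2_pi_update μ i (fun j _ => (hμ j).2) ν
  have hKL_push := KL2_pi_update (fun j => push (μ j) (K j)) i
    (fun j _ => (push_isPMF (hμ j) (hK j)).2) (push ν (K i))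
  rw [← hKL, ← hKL_push]
  simp only [← hpush, ← push_pi]
  refine div_le_etaAt (isPMF_pi hμ).1 (fun x => isPMF_pi fun i => hK i (x i)) (isPMF_pi hupdate)
    ?_ (hKL ▸ hpos)
  intro x hx
  obtain ⟨j, -, hj⟩ := prod_eq_zero_iff.1 hx
  refine prod_eq_zero (mem_univ j) ?_
  rcases eq_or_ne j i with rfl | hji <;> simp [*]

end Pi

universe u v

lemma SatisfiesSDPI.pi {M : ℝ} (hM : 0 ≤ M) {n : ℕ} {α : Fin n → Type u} {β : Fin n → Type v}
    [∀ i, Fintype (α i)] [∀ i, Fintype (β i)] {μ : ∀ i, α i → ℝ} {K : ∀ i, α i → β i → ℝ}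
    (hμ : ∀ i a, 0 ≤ μ i a) (hK : ∀ i x, IsPMF (K i x)) (h : ∀ i, SatisfiesSDPI (μ i) (K i) M) :
    SatisfiesSDPI (fun x : ∀ i, α i => ∏ i, μ i (x i))
      (fun (x : ∀ i, α i) (y : ∀ i, β i) => ∏ i, K i (x i) (y i)) M := by
  induction n with
  | zero =>
    intro ν hν _
    have : ν = fun _ => 1 := funext fun x => by simpa [Subsingleton.elim x default] using hν.2
    simp [this]
  | succ n ih =>
    have hpair := (SatisfiesSDPI.prod hM (hμ 0) (fun x => prod_nonneg fun i _ => hμ i.succ _)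
      (hK 0) (fun x => isPMF_pi fun i => hK i.succ (x i)) (h 0)
      (ih (fun i => hμ i.succ) (fun i => hK i.succ) fun i => h i.succ)).comp_equiv
      (Fin.consEquiv α).symm (Fin.consEquiv β).symm
    convert hpair using 3 <;> exact Fin.prod_univ_succ _

/-- tensorization of the SDPI constant:
η(μ₁⊗⋯⊗μ_n, K₁⊗⋯⊗K_n) = max_i η(μ_i, K_i). -/
theorem sdpi_tensorization
    {n : ℕ} (hn : 0 < n)
    {α β : Fin n → Type*} [∀ i, Fintype (α i)] [∀ i, Fintype (β i)]
    (μ : ∀ i, α i → ℝ) (hμ : ∀ i, IsPMF (μ i))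
    (K : ∀ i, α i → β i → ℝ) (hK : ∀ i x, IsPMF (K i x)) :
    etaAt (fun x : ∀ i, α i => ∏ i, μ i (x i))
          (fun (x : ∀ i, α i) (y : ∀ i, β i) => ∏ i, K i (x i) (y i)) =
      Finset.univ.sup' (Finset.univ_nonempty_iff.mpr ⟨⟨0, hn⟩⟩)
        (fun i => etaAt (μ i) (K i)) := by
  set M := Finset.univ.sup' (Finset.univ_nonempty_iff.mpr ⟨⟨0, hn⟩⟩) fun i => etaAt (μ i) (K i)
  have hle : ∀ i, etaAt (μ i) (K i) ≤ M := fun i =>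
    le_sup' (fun i => etaAt (μ i) (K i)) (mem_univ i)
  have hM : 0 ≤ M := (etaAt_nonneg (hμ ⟨0, hn⟩) (hK ⟨0, hn⟩)).trans (hle _)
  have hprod := SatisfiesSDPI.pi hM (fun i => (hμ i).1) hK fun i =>
    (satisfiesSDPI_etaAt (hμ i) (hK i)).mono (hμ i) (hle i)
  exact le_antisymm (hprod.etaAt_le hM) (sup'_le _ _ fun i _ => etaAt_le_etaAt_pi hμ hK i)
end

section
/- Conditional SDPI: if (Y,Z) → U → V is a Markov chain (conditionally on any value of Z), with the channel from U to V equal to a fixed kernel K with SDPI constant η(K), then I(Y;V|Z) ≤ η(K) · I(Y;U|Z). -/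
open Finset Real

/-- Conditional mutual information I(A;B|Z) (in bits) of a joint pmf on Z × A × B. -/
noncomputable def condMI2 {Z A B : Type*} [Fintype Z] [Fintype A] [Fintype B]
    (p : Z × A × B → ℝ) : ℝ :=
  ∑ x : Z × A × B, p x * Real.logb 2
    ((p x * ∑ ab : A × B, p (x.1, ab.1, ab.2)) /
     ((∑ b, p (x.1, x.2.1, b)) * (∑ a, p (x.1, a, x.2.2))))

private lemma one_sub_inv_le_log {x : ℝ} (hx : 0 < x) : 1 - x⁻¹ ≤ Real.log x := by
  have h := Real.log_le_sub_one_of_pos (inv_pos.mpr hx)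
  rw [Real.log_inv] at h; linarith

private lemma log_sum_ineq {ι : Type*} [Fintype ι] (a b : ι → ℝ)
    (ha : ∀ i, 0 ≤ a i) (hb : ∀ i, 0 ≤ b i) (hab : ∀ i, b i = 0 → a i = 0) :
    (∑ i, a i) * Real.log ((∑ i, a i) / (∑ i, b i)) ≤ ∑ i, a i * Real.log (a i / b i) := by
  set A := ∑ i, a i with hA
  set B := ∑ i, b i with hB
  rcases (Finset.sum_nonneg (fun i _ => ha i)).eq_or_lt with h0 | hApos
  · have hz : ∀ i ∈ (univ : Finset ι), a i = 0 :=
      (Finset.sum_eq_zero_iff_of_nonneg (fun i _ => ha i)).mp h0.symm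
    have : A = 0 := by rw [hA]; exact Finset.sum_eq_zero hz
    rw [this, zero_mul]
    apply Finset.sum_nonneg
    intro i _; rw [hz i (mem_univ i), zero_mul]
  · obtain ⟨i0, -, hi0⟩ := Finset.exists_lt_of_sum_lt
      (f := fun _ : ι => (0:ℝ)) (g := a) (by simpa using hApos)
    have hbi0 : 0 < b i0 := lt_of_le_of_ne (hb i0) (fun h => by
      have := hab i0 h.symm; linarith)
    have hBpos : 0 < B := Finset.sum_pos' (fun i _ => hb i) ⟨i0, mem_univ i0, hbi0⟩
    have key : ∀ i, a i - b i * (A / B) ≤ a i * Real.log (a i / b i) - a i * Real.log (A / B) := by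
      intro i
      by_cases hai : a i = 0
      · rw [hai]; simp only [zero_mul, zero_sub, sub_zero]
        have : 0 ≤ b i * (A / B) := mul_nonneg (hb i) (div_nonneg hApos.le hBpos.le)
        linarith
      · have haip : 0 < a i := lt_of_le_of_ne (ha i) (Ne.symm hai)
        have hbip : 0 < b i := lt_of_le_of_ne (hb i) (fun h => hai (hab i h.symm))
        have harg : 0 < (a i / b i) / (A / B) :=
          div_pos (div_pos haip hbip) (div_pos hApos hBpos)
        have h1 := one_sub_inv_le_log harg
        have h2 : Real.log ((a i / b i) / (A / B)) =
            Real.log (a i / b i) - Real.log (A / B) :=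
          Real.log_div (div_pos haip hbip).ne' (div_pos hApos hBpos).ne'
        rw [h2] at h1
        have h3 := mul_le_mul_of_nonneg_left h1 haip.le
        have h4 : a i * (1 - ((a i / b i) / (A / B))⁻¹) = a i - b i * (A / B) := by
          field_simp
        rw [h4, mul_sub] at h3
        exact h3
    have hsum := Finset.sum_le_sum (s := (univ : Finset ι)) (fun i _ => key i)
    rw [Finset.sum_sub_distrib, Finset.sum_sub_distrib, ← Finset.sum_mul, ← Finset.sum_mul,
      ← hA, ← hB] at hsum
    have hBA : B * (A / B) = A := by field_simp
    rw [hBA] at hsum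
    linarith

private lemma logb_sum_ineq {ι : Type*} [Fintype ι] (a b : ι → ℝ)
    (ha : ∀ i, 0 ≤ a i) (hb : ∀ i, 0 ≤ b i) (hab : ∀ i, b i = 0 → a i = 0) :
    (∑ i, a i) * Real.logb 2 ((∑ i, a i) / (∑ i, b i)) ≤ ∑ i, a i * Real.logb 2 (a i / b i) := by
  have h := log_sum_ineq a b ha hb hab
  have h2 : (0:ℝ) < Real.log 2 := Real.log_pos one_lt_two
  simp only [Real.logb]
  rw [mul_div_assoc']
  have : ∑ i, a i * (Real.log (a i / b i) / Real.log 2)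
      = (∑ i, a i * Real.log (a i / b i)) / Real.log 2 := by
    rw [Finset.sum_div]
    exact Finset.sum_congr rfl (fun i _ => by rw [mul_div_assoc'])
  rw [this]
  gcongr

private lemma kl_nonneg {α : Type*} [Fintype α] {μ ν : α → ℝ}
    (hν : IsPMF ν) (hμ : IsPMF μ) (habs : ∀ x, μ x = 0 → ν x = 0) : 0 ≤ KL2 ν μ := by
  have h := logb_sum_ineq ν μ hν.1 hμ.1 habs
  rw [hν.2, hμ.2] at h
  simpa [KL2] using h

private lemma dpi {α β : Type*} [Fintype α] [Fintype β] {μ ν : α → ℝ} {K : α → β → ℝ}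
    (hν : IsPMF ν) (hμ : IsPMF μ) (habs : ∀ x, μ x = 0 → ν x = 0)
    (hK : ∀ u, IsPMF (K u)) :
    KL2 (push ν K) (push μ K) ≤ KL2 ν μ := by
  have step1 : KL2 (push ν K) (push μ K) ≤
      ∑ v, ∑ u, (ν u * K u v) * Real.logb 2 ((ν u * K u v) / (μ u * K u v)) := by
    apply Finset.sum_le_sum
    intro v _
    exact logb_sum_ineq (fun u => ν u * K u v) (fun u => μ u * K u v)
      (fun u => mul_nonneg (hν.1 u) ((hK u).1 v))
      (fun u => mul_nonneg (hμ.1 u) ((hK u).1 v))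
      (fun u h => by
        show ν u * K u v = 0
        rcases mul_eq_zero.mp h with h' | h'
        · rw [habs u h', zero_mul]
        · rw [h', mul_zero])
  have step2 : ∑ v, ∑ u, (ν u * K u v) * Real.logb 2 ((ν u * K u v) / (μ u * K u v))
      = KL2 ν μ := by
    rw [Finset.sum_comm]
    unfold KL2
    apply Finset.sum_congr rfl
    intro u _
    have hterm : ∀ v, (ν u * K u v) * Real.logb 2 ((ν u * K u v) / (μ u * K u v))
        = (ν u * Real.logb 2 (ν u / μ u)) * K u v := by
      intro v
      by_cases hKv : K u v = 0
      · simp [hKv]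
      · have harg : (ν u * K u v) / (μ u * K u v) = ν u / μ u :=
          mul_div_mul_right _ _ hKv
        rw [harg]; ring
    simp_rw [hterm]
    rw [← Finset.mul_sum, (hK u).2, mul_one]
  linarith

private lemma sdpi_point {α β : Type*} [Fintype α] [Fintype β] {μ ν : α → ℝ} {K : α → β → ℝ}
    (hν : IsPMF ν) (hμ : IsPMF μ) (habs : ∀ x, μ x = 0 → ν x = 0)
    (hK : ∀ u, IsPMF (K u)) :
    KL2 (push ν K) (push μ K) ≤ etaCh K * KL2 ν μ := by
  have h0 := kl_nonneg hν hμ habs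
  have hd := dpi hν hμ habs hK
  rcases h0.eq_or_lt with heq | hpos
  · rw [← heq, mul_zero]; linarith
  · have hmem : KL2 (push ν K) (push μ K) / KL2 ν μ ∈
        { r | ∃ μ' ν' : α → ℝ, IsPMF μ' ∧ IsPMF ν' ∧ (∀ x, μ' x = 0 → ν' x = 0) ∧
          0 < KL2 ν' μ' ∧ r = KL2 (push ν' K) (push μ' K) / KL2 ν' μ' } :=
      ⟨μ, ν, hμ, hν, habs, hpos, rfl⟩
    have hbdd : BddAbove { r | ∃ μ' ν' : α → ℝ, IsPMF μ' ∧ IsPMF ν' ∧ (∀ x, μ' x = 0 → ν' x = 0) ∧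
          0 < KL2 ν' μ' ∧ r = KL2 (push ν' K) (push μ' K) / KL2 ν' μ' } := by
      refine ⟨1, ?_⟩
      rintro r ⟨μ', ν', hμ', hν', habs', hpos', rfl⟩
      exact (div_le_one hpos').mpr (dpi hν' hμ' habs' hK)
    have hle := le_csSup hbdd hmem
    calc KL2 (push ν K) (push μ K)
        = (KL2 (push ν K) (push μ K) / KL2 ν μ) * KL2 ν μ := (div_mul_cancel₀ _ hpos.ne').symm
      _ ≤ etaCh K * KL2 ν μ := mul_le_mul_of_nonneg_right hle hpos.le

private lemma per_pair {U V : Type*} [Fintype U] [Fintype V]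
    (K : U → V → ℝ) (hK : ∀ u, IsPMF (K u)) (f t : U → ℝ)
    (hf : ∀ u, 0 ≤ f u) (hft : ∀ u, f u ≤ t u) :
    ∑ v, (∑ u, f u * K u v) * Real.logb 2
        (((∑ u, f u * K u v) * ∑ u, t u) / ((∑ u, f u) * (∑ u, t u * K u v)))
    ≤ etaCh K * ∑ u, f u * Real.logb 2 ((f u * ∑ u', t u') / ((∑ u', f u') * t u)) := by
  have ht : ∀ u, 0 ≤ t u := fun u => (hf u).trans (hft u)
  rcases (Finset.sum_nonneg (fun u (_ : u ∈ univ) => hf u)).eq_or_lt with hS | hS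
  · have hz : ∀ u, f u = 0 := fun u =>
      le_antisymm (by
        have := (Finset.sum_eq_zero_iff_of_nonneg (fun u _ => hf u)).mp hS.symm
        exact le_of_eq (this u (mem_univ u))) (hf u)
    simp [hz]
  · set S := ∑ u, f u with hSdef
    set C := ∑ u, t u with hCdef
    have hC : 0 < C := lt_of_lt_of_le hS (Finset.sum_le_sum fun u _ => hft u)
    have hS0 : S ≠ 0 := hS.ne'
    have hC0 : C ≠ 0 := hC.ne'
    set ν : U → ℝ := fun u => f u / S with hνdef
    set μ : U → ℝ := fun u => t u / C with hμdef
    have hν : IsPMF ν := ⟨fun u => div_nonneg (hf u) hS.le, by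
      simp only [hνdef, ← Finset.sum_div]; exact div_self hS0⟩
    have hμ : IsPMF μ := ⟨fun u => div_nonneg (ht u) hC.le, by
      simp only [hμdef, ← Finset.sum_div]; exact div_self hC0⟩
    have habs : ∀ u, μ u = 0 → ν u = 0 := by
      intro u h
      have htu : t u = 0 := by
        rcases div_eq_zero_iff.mp h with h' | h'
        · exact h'
        · exact absurd h' hC0
      have hfu : f u = 0 := le_antisymm (htu ▸ hft u) (hf u)
      simp [hνdef, hfu]
    have hsd := sdpi_point hν hμ habs hK
    have hA : ∑ u, f u * Real.logb 2 ((f u * C) / (S * t u)) = S * KL2 ν μ := by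
      unfold KL2
      rw [Finset.mul_sum]
      apply Finset.sum_congr rfl
      intro u _
      by_cases hfu : f u = 0
      · simp [hνdef, hfu]
      · have harg : ν u / μ u = f u * C / (S * t u) := by
          simp only [hνdef, hμdef, div_eq_mul_inv, mul_inv, inv_inv]
          ring
        rw [harg, ← mul_assoc, mul_comm S (ν u), hνdef, div_mul_cancel₀ _ hS0]
    have hB : ∑ v, (∑ u, f u * K u v) * Real.logb 2
        (((∑ u, f u * K u v) * C) / (S * (∑ u, t u * K u v)))
        = S * KL2 (push ν K) (push μ K) := by
      unfold KL2 push
      rw [Finset.mul_sum]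
      apply Finset.sum_congr rfl
      intro v _
      have e1 : ∑ u, ν u * K u v = (∑ u, f u * K u v) / S := by
        rw [Finset.sum_div]
        exact Finset.sum_congr rfl (fun u _ => by rw [hνdef]; ring)
      have e2 : ∑ u, μ u * K u v = (∑ u, t u * K u v) / C := by
        rw [Finset.sum_div]
        exact Finset.sum_congr rfl (fun u _ => by rw [hμdef]; ring)
      rw [e1, e2]
      have harg : (∑ u, f u * K u v) / S / ((∑ u, t u * K u v) / C)
          = (∑ u, f u * K u v) * C / (S * (∑ u, t u * K u v)) := by
        simp only [div_eq_mul_inv, mul_inv, inv_inv]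
        ring
      rw [harg, ← mul_assoc, mul_comm S ((∑ u, f u * K u v) / S), div_mul_cancel₀ _ hS0]
    rw [hA, hB]
    calc S * KL2 (push ν K) (push μ K) ≤ S * (etaCh K * KL2 ν μ) :=
          mul_le_mul_of_nonneg_left hsd hS.le
      _ = etaCh K * (S * KL2 ν μ) := by ring

private lemma per_z {Y U V : Type*} [Fintype Y] [Fintype U] [Fintype V]
    (K : U → V → ℝ) (hK : ∀ u, IsPMF (K u)) (f : Y → U → ℝ) (hf : ∀ y u, 0 ≤ f y u) :
    ∑ y, ∑ v, (∑ u, f y u * K u v) * Real.logb 2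
        (((∑ u, f y u * K u v) * ∑ y', ∑ v', ∑ u, f y' u * K u v') /
         ((∑ v', ∑ u, f y u * K u v') * ∑ y', ∑ u, f y' u * K u v))
    ≤ etaCh K * ∑ y, ∑ u, f y u * Real.logb 2
        ((f y u * ∑ y', ∑ u', f y' u') / ((∑ u', f y u') * ∑ y', f y' u)) := by
  have hrow : ∀ g : U → ℝ, ∑ v, ∑ u, g u * K u v = ∑ u, g u := by
    intro g; rw [Finset.sum_comm]
    exact Finset.sum_congr rfl fun u _ => by rw [← Finset.mul_sum, (hK u).2, mul_one]
  have hsw : ∀ v : V, ∑ y' : Y, ∑ u, f y' u * K u v = ∑ u, (∑ y', f y' u) * K u v := by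
    intro v; rw [Finset.sum_comm]
    exact Finset.sum_congr rfl fun u _ => by rw [Finset.sum_mul]
  have hC : ∑ y' : Y, ∑ u' : U, f y' u' = ∑ u' : U, ∑ y' : Y, f y' u' :=
    Finset.sum_comm
  simp_rw [hrow, hsw]
  rw [hC, Finset.mul_sum]
  apply Finset.sum_le_sum
  intro y _
  exact per_pair K hK (f y) (fun u => ∑ y', f y' u) (hf y)
    (fun u => Finset.single_le_sum (fun y' _ => hf y' u) (mem_univ y))

/-- conditional SDPI: if (Y,Z) → U → V is a Markov chain with V generated
from U by the kernel K independently of (Y,Z), then I(Y;V|Z) ≤ η(K)·I(Y;U|Z). -/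
theorem conditional_sdpi
    {Y Z U V : Type*} [Fintype Y] [Fintype Z] [Fintype U] [Fintype V]
    (K : U → V → ℝ) (hK : ∀ u, IsPMF (K u))
    (q : Z × Y × U → ℝ) (hq : IsPMF q)
    (p : Z × Y × U × V → ℝ)
    (hp : ∀ z y u v, p (z, y, u, v) = q (z, y, u) * K u v) :
    condMI2 (fun zyv : Z × Y × V => ∑ u, p (zyv.1, zyv.2.1, u, zyv.2.2)) ≤
      etaCh K * condMI2 q := by
  unfold condMI2
  simp only [hp, Fintype.sum_prod_type]
  rw [Finset.mul_sum]
  apply Finset.sum_le_sum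
  intro z _
  exact per_z K hK (fun y u => q (z, y, u)) (fun y u => hq.1 (z, y, u))
end

section
/- If W ∼ Bern(1/2) is transmitted via any encoding over T independent uses of BSC(ε), then any estimator Ŵ from the channel output satisfies 1 − h(P(Ŵ ≠ W)) ≤ 1 − (4ε(1−ε))^T, and hence the minimum blocklength T* needed to achieve error probability at most p satisfies T* ≥ log(1/h(p)) / log(1/(4ε(1−ε))). -/
open Finset Real

/-!
The Bhattacharyya coefficient `B = ∑ᵥ √(P₀ v) √(P₁ v)` of the two output laws controls every
test: writing it as a sum over outputs of `√(rejected mass) · √(accepted mass)`, Cauchy–Schwarz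
gives `B² ≤ 4 Pe (1 - Pe)`. It is multiplicative over independent channel uses, and for one use
of BSC(ε) it equals `1` or `2√(ε(1-ε))`, so `B² ≥ (4ε(1-ε))^T`. Finally `4x(1-x) ≤ h(x)` (in
bits); since `h` is increasing on `[0, 1/2]`, taking logarithms gives the blocklength bound.
-/

theorem nonneg_of_hasDerivAt_of_convexOn {f g : ℝ → ℝ} {a b x : ℝ}
    (hf : ContinuousOn f (Set.Icc a b)) (hfg : ∀ y ∈ Set.Ioo a b, HasDerivAt f (g y) y)
    (hg : ConvexOn ℝ (Set.Ioc a b) g) (hgb : g b ≤ 0) (hfa : 0 ≤ f a) (hfb : 0 ≤ f b)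
    (hx : x ∈ Set.Icc a b) : 0 ≤ f x := by
  have sign_persists : ∀ y z, a < y → y ≤ z → z ≤ b → g y ≤ 0 → g z ≤ 0 :=
    fun y z hay hyz hzb hgy =>
      (hg.le_on_segment ⟨hay, hyz.trans hzb⟩ ⟨hay.trans_le (hyz.trans hzb), le_rfl⟩
        (by rw [segment_eq_Icc (hyz.trans hzb)]; exact ⟨hyz, hzb⟩)).trans (max_le hgy hgb)
  rcases hx.1.eq_or_lt with rfl | hax
  · exact hfa
  by_cases hgx : g x ≤ 0
  · have : AntitoneOn f (Set.Icc x b) := by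
      refine antitoneOn_of_hasDerivWithinAt_nonpos (f' := g) (convex_Icc x b)
        (hf.mono (Set.Icc_subset_Icc hax.le le_rfl)) (fun y hy => ?_) fun y hy => ?_ <;>
        rw [interior_Icc] at hy
      · exact (hfg y ⟨hax.trans hy.1, hy.2⟩).hasDerivWithinAt
      · exact sign_persists x y hax hy.1.le hy.2.le hgx
    exact hfb.trans (this ⟨le_rfl, hx.2⟩ ⟨hx.2, le_rfl⟩ hx.2)
  · have : MonotoneOn f (Set.Icc a x) := by
      refine monotoneOn_of_hasDerivWithinAt_nonneg (f' := g) (convex_Icc a x)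
        (hf.mono (Set.Icc_subset_Icc le_rfl hx.2)) (fun y hy => ?_) fun y hy => ?_ <;>
        rw [interior_Icc] at hy
      · exact (hfg y ⟨hy.1, hy.2.trans_le hx.2⟩).hasDerivWithinAt
      · by_contra! hgy
        exact hgx (sign_persists y x hy.1 hy.2.le hx.2 hgy.le)
    exact hfa.trans (this ⟨le_rfl, hax.le⟩ ⟨hax.le, le_rfl⟩ hax.le)

theorem convexOn_log_one_sub_sub_log_sub_linear (c : ℝ) :
    ConvexOn ℝ (Set.Ioc 0 2⁻¹) fun x => log (1 - x) - log x - c * (1 - 2 * x) := by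
  refine convexOn_of_hasDerivWithinAt2_nonneg (convex_Ioc 0 2⁻¹)
    (f' := fun x => -(1 - x)⁻¹ - x⁻¹ + 2 * c) (f'' := fun x => x⁻¹ ^ 2 - (1 - x)⁻¹ ^ 2)
    ?_ (fun x hx => ?_) (fun x hx => ?_) fun x hx => ?_ <;> try rw [interior_Ioc] at hx
  · intro x hx
    have : 1 - x ≠ 0 := by linarith [hx.2]
    exact (((continuousAt_log this).comp (by fun_prop)).sub (continuousAt_log hx.1.ne') |>.sub
      (by fun_prop)).continuousWithinAt
  · have h1 : 1 - x ≠ 0 := by linarith [hx.2]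
    have := (((hasDerivAt_id x).const_sub 1).log h1).sub (hasDerivAt_log hx.1.ne') |>.sub
      (((hasDerivAt_id x).const_mul 2).const_sub 1 |>.const_mul c)
    exact (this.congr_deriv (by simp only [id]; field_simp; ring)).hasDerivWithinAt
  · have h1 : 1 - x ≠ 0 := by linarith [hx.2]
    have := (((hasDerivAt_id x).const_sub 1).inv h1).neg.sub ((hasDerivAt_id x).inv hx.1.ne')
      |>.add_const (2 * c)
    exact (this.congr_deriv (by simp only [id]; field_simp; ring)).hasDerivWithinAt
  · have : x ≤ 1 - x := by linarith [hx.2]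
    have := inv_anti₀ hx.1 this
    have : 0 ≤ (1 - x)⁻¹ := inv_nonneg.2 (by linarith)
    simp only [sub_nonneg]
    exact pow_le_pow_left₀ this ‹_› 2

theorem four_mul_log_two_mul_le_binEntropy {x : ℝ} (h0 : 0 ≤ x) (h1 : x ≤ 1) :
    4 * log 2 * (x * (1 - x)) ≤ binEntropy x := by
  wlog hx : x ≤ 2⁻¹ generalizing x
  · simpa [mul_comm] using this (x := 1 - x) (by linarith) (by linarith) (by linarith)
  suffices 0 ≤ binEntropy x - 4 * log 2 * (x * (1 - x)) by linarith
  refine nonneg_of_hasDerivAt_of_convexOn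
    (f := fun y => binEntropy y - 4 * log 2 * (y * (1 - y))) (by fun_prop) (fun y hy => ?_)
    (convexOn_log_one_sub_sub_log_sub_linear (4 * log 2)) (by norm_num) (by simp)
    (by rw [binEntropy_two_inv]; linarith) ⟨h0, hx⟩
  have hy1 : y ≠ 1 := by linarith [hy.2]
  have := (hasDerivAt_binEntropy hy.1.ne' hy1).sub
    (((hasDerivAt_id y).mul ((hasDerivAt_id y).const_sub 1)).const_mul (4 * log 2))
  exact this.congr_deriv (by simp only [id]; ring)

theorem binH_eq_binEntropy_div (x : ℝ) : binH x = binEntropy x / log 2 := by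
  simp only [binH, binEntropy, logb, log_inv]
  ring

theorem four_mul_le_binH {x : ℝ} (h0 : 0 ≤ x) (h1 : x ≤ 1) : 4 * x * (1 - x) ≤ binH x := by
  rw [binH_eq_binEntropy_div, le_div_iff₀ (log_pos one_lt_two)]
  linarith [four_mul_log_two_mul_le_binEntropy h0 h1]

theorem binH_monotoneOn : MonotoneOn binH (Set.Icc 0 2⁻¹) := fun x hx y hy hxy => by
  simp only [binH_eq_binEntropy_div]
  exact div_le_div_of_nonneg_right (binEntropy_strictMonoOn.monotoneOn hx hy hxy)
    (log_nonneg one_le_two)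

theorem div_logb_inv_le_of_pow_le {b d y : ℝ} {n : ℕ} (hb : 1 < b) (hd0 : 0 < d) (hd1 : d < 1)
    (h : d ^ n ≤ y) : logb b (1 / y) / logb b (1 / d) ≤ n := by
  have hlogd : logb b d < 0 := logb_neg hb hd0 hd1
  rw [one_div, one_div, logb_inv, logb_inv, neg_div_neg_eq, div_le_iff_of_neg hlogd,
    ← logb_pow]
  exact logb_le_logb_of_le hb (pow_pos hd0 n) h

section Testing

variable {V : Type*} [Fintype V]

noncomputable def bhattacharyya (P Q : V → ℝ) : ℝ := ∑ v, √(P v) * √(Q v)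

/-- `P w` is the law of the observation when the bit `w` is sent; the bit is uniform. -/
noncomputable def errorProb (P : Bool → V → ℝ) (ψ : V → Bool) : ℝ :=
  ∑ z : Bool × V, if ψ z.2 ≠ z.1 then 1 / 2 * P z.1 z.2 else 0

theorem errorProb_eq (P : Bool → V → ℝ) (ψ : V → Bool) :
    errorProb P ψ = 1 / 2 * ∑ v, P (!ψ v) v := by
  rw [errorProb, Fintype.sum_prod_type_right, mul_sum]
  refine sum_congr rfl fun v _ => ?_
  cases h : ψ v <;> simp [h]

theorem one_sub_errorProb {P : Bool → V → ℝ} (hP : ∀ w, IsPMF (P w)) (ψ : V → Bool) :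
    1 - errorProb P ψ = 1 / 2 * ∑ v, P (ψ v) v := by
  have : ∑ v, P (!ψ v) v + ∑ v, P (ψ v) v = 2 := by
    rw [← sum_add_distrib]
    calc ∑ v, (P (!ψ v) v + P (ψ v) v) = ∑ v, (P false v + P true v) :=
          sum_congr rfl fun v _ => by cases ψ v <;> simp [add_comm]
      _ = 2 := by rw [sum_add_distrib, (hP false).2, (hP true).2]; norm_num
  rw [errorProb_eq]
  linarith

theorem errorProb_nonneg {P : Bool → V → ℝ} (hP : ∀ w, IsPMF (P w)) (ψ : V → Bool) :
    0 ≤ errorProb P ψ := by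
  rw [errorProb_eq]
  exact mul_nonneg (by norm_num) (sum_nonneg fun v _ => (hP _).1 v)

theorem errorProb_le_one {P : Bool → V → ℝ} (hP : ∀ w, IsPMF (P w)) (ψ : V → Bool) :
    errorProb P ψ ≤ 1 := by
  have := one_sub_errorProb hP ψ
  have : 0 ≤ ∑ v, P (ψ v) v := sum_nonneg fun v _ => (hP _).1 v
  linarith

theorem sq_bhattacharyya_le_errorProb {P : Bool → V → ℝ} (hP : ∀ w, IsPMF (P w))
    (ψ : V → Bool) :
    bhattacharyya (P false) (P true) ^ 2 ≤ 4 * errorProb P ψ * (1 - errorProb P ψ) := by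
  -- Pair the mass the test rejects with the mass it accepts, then apply Cauchy–Schwarz.
  have hsplit : bhattacharyya (P false) (P true) = ∑ v, √(P (!ψ v) v) * √(P (ψ v) v) :=
    sum_congr rfl fun v _ => by cases ψ v <;> simp [mul_comm]
  have hCS := sum_sqrt_mul_sqrt_le univ (fun v => (hP (!ψ v)).1 v) fun v => (hP (ψ v)).1 v
  have hB : 0 ≤ bhattacharyya (P false) (P true) := sum_nonneg fun v _ => by positivity
  rw [← hsplit] at hCS
  calc bhattacharyya (P false) (P true) ^ 2
      ≤ (√(∑ v, P (!ψ v) v) * √(∑ v, P (ψ v) v)) ^ 2 := pow_le_pow_left₀ hB hCS 2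
    _ = 4 * errorProb P ψ * (1 - errorProb P ψ) := by
      rw [mul_pow, sq_sqrt (sum_nonneg fun v _ => (hP _).1 v),
        sq_sqrt (sum_nonneg fun v _ => (hP _).1 v), one_sub_errorProb hP, errorProb_eq]
      ring

end Testing

theorem IsPMF.pi {ι α : Type*} [Fintype ι] [DecidableEq ι] [Fintype α] {P : ι → α → ℝ}
    (hP : ∀ i, IsPMF (P i)) : IsPMF fun x : ι → α => ∏ i, P i (x i) :=
  ⟨fun x => prod_nonneg fun i _ => (hP i).1 (x i), by
    rw [← Fintype.prod_sum]; exact prod_eq_one fun i _ => (hP i).2⟩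

theorem bhattacharyya_pi {ι α : Type*} [Fintype ι] [DecidableEq ι] [Fintype α]
    {P Q : ι → α → ℝ} (hP : ∀ i a, 0 ≤ P i a) (hQ : ∀ i a, 0 ≤ Q i a) :
    bhattacharyya (fun x : ι → α => ∏ i, P i (x i)) (fun x => ∏ i, Q i (x i)) =
      ∏ i, bhattacharyya (P i) (Q i) := by
  simp only [bhattacharyya]
  rw [Fintype.prod_sum]
  refine sum_congr rfl fun x _ => ?_
  rw [sqrt_prod _ fun i _ => hP i _, sqrt_prod _ fun i _ => hQ i _, prod_mul_distrib]

theorem isPMF_BSC {ε : ℝ} (h0 : 0 ≤ ε) (h1 : ε ≤ 1) (u : Bool) : IsPMF (BSC ε u) :=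
  ⟨fun v => by unfold BSC; split <;> linarith, by cases u <;> simp [BSC]⟩

theorem sqrt_four_mul_le_bhattacharyya_BSC {ε : ℝ} (h0 : 0 ≤ ε) (u u' : Bool) :
    √(4 * ε * (1 - ε)) ≤ bhattacharyya (BSC ε u) (BSC ε u') := by
  have hsq : √(4 * ε * (1 - ε)) = 2 * √ε * √(1 - ε) := by
    rw [show 4 * ε * (1 - ε) = 2 ^ 2 * ε * (1 - ε) by ring, sqrt_mul (by positivity),
      sqrt_mul (by positivity), sqrt_sq zero_le_two]
  rw [hsq, bhattacharyya, Fintype.sum_bool]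
  cases u <;> cases u' <;> simp only [BSC] <;> norm_num
  all_goals nlinarith [sq_nonneg (√ε - √(1 - ε))]

theorem pow_le_sq_bhattacharyya_pi_BSC {ι : Type*} [Fintype ι] [DecidableEq ι] {ε : ℝ}
    (h0 : 0 ≤ ε) (h1 : ε ≤ 1) (c c' : ι → Bool) :
    (4 * ε * (1 - ε)) ^ Fintype.card ι ≤
      bhattacharyya (fun v : ι → Bool => ∏ i, BSC ε (c i) (v i))
        (fun v => ∏ i, BSC ε (c' i) (v i)) ^ 2 := by
  calc (4 * ε * (1 - ε)) ^ Fintype.card ι = (∏ _i : ι, √(4 * ε * (1 - ε))) ^ 2 := by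
        rw [prod_const, card_univ, ← pow_mul, mul_comm (Fintype.card ι), pow_mul,
          sq_sqrt (by positivity)]
    _ ≤ (∏ i, bhattacharyya (BSC ε (c i)) (BSC ε (c' i))) ^ 2 := by
        gcongr with i
        exact sqrt_four_mul_le_bhattacharyya_BSC h0 _ _
    _ = _ := by
        rw [bhattacharyya_pi (fun i => (isPMF_BSC h0 h1 (c i)).1)
          fun i => (isPMF_BSC h0 h1 (c' i)).1]

/-- transmitting a uniform bit over T uses of BSC(ε): any encoder/decoder
satisfies 1 − h(P_e) ≤ 1 − (4ε(1−ε))^T; hence achieving P_e ≤ p requires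
T ≥ log(1/h(p)) / log(1/(4ε(1−ε))). -/
theorem one_bit_over_bsc_converse
    (ε : ℝ) (hε0 : 0 < ε) (hε1 : ε < 1/2)
    (T : ℕ) (f : Bool → Fin T → Bool) (ψ : (Fin T → Bool) → Bool)
    (p : Bool × (Fin T → Bool) → ℝ)
    (hp : ∀ w v, p (w, v) = (1/2) * ∏ t, BSC ε (f w t) (v t))
    (Pe : ℝ)
    (hPe : Pe = ∑ z : Bool × (Fin T → Bool), if ψ z.2 ≠ z.1 then p z else 0) :
    1 - binH Pe ≤ 1 - (4 * ε * (1 - ε)) ^ T ∧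
    ∀ q : ℝ, 0 < q → q < 1/2 → Pe ≤ q →
      (T : ℝ) ≥ Real.logb 2 (1 / binH q) / Real.logb 2 (1 / (4 * ε * (1 - ε))) := by
  have hε1' : ε ≤ 1 := by linarith
  set P : Bool → (Fin T → Bool) → ℝ := fun w v => ∏ t, BSC ε (f w t) (v t)
  have hP : ∀ w, IsPMF (P w) := fun w => IsPMF.pi fun t => isPMF_BSC hε0.le hε1' _
  obtain rfl : Pe = errorProb P ψ := hPe.trans (sum_congr rfl fun z _ => by rw [← hp])
  have hPe0 := errorProb_nonneg hP ψ
  have hHPe : (4 * ε * (1 - ε)) ^ T ≤ binH (errorProb P ψ) := calc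
    _ ≤ bhattacharyya (P false) (P true) ^ 2 := by
      simpa using pow_le_sq_bhattacharyya_pi_BSC hε0.le hε1' (f false) (f true)
    _ ≤ 4 * errorProb P ψ * (1 - errorProb P ψ) := sq_bhattacharyya_le_errorProb hP ψ
    _ ≤ binH (errorProb P ψ) := four_mul_le_binH hPe0 (errorProb_le_one hP ψ)
  refine ⟨by linarith, fun q hq0 hq1 hPeq => ?_⟩
  have hHq : (4 * ε * (1 - ε)) ^ T ≤ binH q :=
    hHPe.trans <| binH_monotoneOn ⟨hPe0, by linarith⟩ ⟨hq0.le, by linarith⟩ hPeq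
  exact div_logb_inv_le_of_pow_le one_lt_two (by nlinarith) (by nlinarith) hHq
end

section
/- For the channel P_{W_j|X_j^n} arising from W_j uniform on {±1} and n i.i.d. observations through BSC((1−δ)/2), the Dobrushin coefficient equals (1−β^n)/(1+β^n) with β = (1−δ)/(1+δ): ϑ(P_{W_j|X_j^n}) = (1−β^n)/(1+β^n). -/
open Finset Real

/-! The posterior of `true` is `(1 + ρ)⁻¹`, where `ρ` is the likelihood ratio of the observations;
each observation multiplies `ρ` by `β` or by `β⁻¹`, so `ρ ∈ [βⁿ, β⁻ⁿ]` with both ends attained by the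
constant sequences. Since the posterior is a probability vector on two points, the total variation
distance between two posteriors is the difference of their `true` coordinates, whose maximum is
`(1 + βⁿ)⁻¹ - (1 + β⁻ⁿ)⁻¹ = (1 - βⁿ) / (1 + βⁿ)`. -/

lemma half_mul_sum_bool_abs_sub {p q : Bool → ℝ} (hp : ∑ w, p w = 1) (hq : ∑ w, q w = 1) :
    (1 / 2) * ∑ w, |p w - q w| = |p true - q true| := by
  rw [Fintype.sum_bool] at hp hq ⊢
  rw [show p false - q false = -(p true - q true) by linarith, abs_neg]
  ring

lemma div_add_eq_inv_one_add_div {a : ℝ} (b : ℝ) (ha : a ≠ 0) : a / (a + b) = (1 + b / a)⁻¹ := by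
  rw [one_add_div ha, inv_div]

lemma Finset.prod_mem_Icc_pow {ι : Type*} (s : Finset ι) {f : ι → ℝ} {a b : ℝ} (ha : 0 ≤ a)
    (hf : ∀ i ∈ s, f i ∈ Set.Icc a b) : ∏ i ∈ s, f i ∈ Set.Icc (a ^ s.card) (b ^ s.card) := by
  rw [← Finset.prod_const, ← Finset.prod_const]
  exact ⟨Finset.prod_le_prod (fun _ _ => ha) fun i hi => (hf i hi).1,
    Finset.prod_le_prod (fun i hi => ha.trans (hf i hi).1) fun i hi => (hf i hi).2⟩

lemma Finset.prod_ite_inv_mem_Icc {ι : Type*} (s : Finset ι) (p : ι → Prop) [DecidablePred p] {β : ℝ}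
    (hβ0 : 0 < β) (hβ1 : β ≤ 1) :
    ∏ i ∈ s, (if p i then β else β⁻¹) ∈ Set.Icc (β ^ s.card) (β ^ s.card)⁻¹ := by
  have hβ : β ≤ β⁻¹ := hβ1.trans ((one_le_inv₀ hβ0).2 hβ1)
  rw [← inv_pow]
  exact prod_mem_Icc_pow s hβ0.le fun i _ => by
    split_ifs
    exacts [⟨le_rfl, hβ⟩, ⟨hβ, le_rfl⟩]

lemma inv_one_add_mem_Icc {r c : ℝ} (hc : 0 < c) (hr : r ∈ Set.Icc c c⁻¹) :
    (1 + r)⁻¹ ∈ Set.Icc (1 + c⁻¹)⁻¹ (1 + c)⁻¹ := by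
  have hr0 : 0 < r := hc.trans_le hr.1
  exact ⟨inv_anti₀ (by positivity) (by linarith [hr.2]),
    inv_anti₀ (by positivity) (by linarith [hr.1])⟩

lemma Finset.sup'_abs_sub_eq_of_mem_Icc {ι : Type*} [Fintype ι] [Nonempty ι] {g : ι → ℝ}
    {lo hi : ℝ} (hg : ∀ i, g i ∈ Set.Icc lo hi) {i₀ i₁ : ι} (h₀ : g i₀ = hi) (h₁ : g i₁ = lo) :
    univ.sup' univ_nonempty (fun p : ι × ι => |g p.1 - g p.2|) = hi - lo := by
  apply le_antisymm
  · exact sup'_le _ _ fun p _ =>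
      abs_sub_le_of_le_of_le (hg p.1).1 (hg p.1).2 (hg p.2).1 (hg p.2).2
  · calc hi - lo = |g i₀ - g i₁| := by
          rw [h₀, h₁, abs_of_nonneg (sub_nonneg.2 ((hg i₀).1.trans (hg i₀).2))]
      _ ≤ _ := le_sup' (fun p : ι × ι => |g p.1 - g p.2|) (mem_univ (i₀, i₁))

lemma bsc_likelihood_ratio {δ : ℝ} {like : Bool → Bool → ℝ}
    (hlike : ∀ w x, like w x = if x = w then (1 + δ)/2 else (1 - δ)/2) (x : Bool) :
    like false x / like true x = if x then (1 - δ) / (1 + δ) else ((1 - δ) / (1 + δ))⁻¹ := by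
  cases x <;> simp [hlike, div_div_div_cancel_right₀]

/-- for W_j uniform on {±1} (modeled as Bool) and n i.i.d. observations
through BSC((1−δ)/2), the Dobrushin coefficient of the posterior kernel equals
(1−β^n)/(1+β^n) with β = (1−δ)/(1+δ). -/
theorem dobrushin_posterior_bsc
    (n : ℕ) (δ : ℝ) (hδ0 : 0 ≤ δ) (hδ1 : δ < 1)
    (β : ℝ) (hβ : β = (1 - δ) / (1 + δ))
    (like : Bool → Bool → ℝ)
    (hlike : ∀ w x, like w x = if x = w then (1 + δ)/2 else (1 - δ)/2)
    (post : (Fin n → Bool) → Bool → ℝ)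
    (hpost : ∀ x w, post x w =
      ((1/2) * ∏ k, like w (x k)) / ∑ w' : Bool, (1/2) * ∏ k, like w' (x k)) :
    Finset.univ.sup' Finset.univ_nonempty
      (fun xp : (Fin n → Bool) × (Fin n → Bool) =>
        (1/2) * ∑ w : Bool, |post xp.1 w - post xp.2 w|) =
      (1 - β^n) / (1 + β^n) := by
  have hβ0 : 0 < β := by rw [hβ]; exact div_pos (by linarith) (by linarith)
  have hβ1 : β ≤ 1 := by rw [hβ, div_le_one (by linarith)]; linarith
  have hlike_pos : ∀ w x, 0 < like w x := fun w x => by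
    rw [hlike]; split_ifs <;> linarith
  set ρ : (Fin n → Bool) → ℝ := fun x => ∏ k, if x k then β else β⁻¹
  have hρ : ∀ x, ρ x ∈ Set.Icc (β ^ n) (β ^ n)⁻¹ := fun x => by
    simpa using prod_ite_inv_mem_Icc univ (fun k => x k = true) hβ0 hβ1
  have hpost_true : ∀ x, post x true = (1 + ρ x)⁻¹ := fun x => by
    rw [hpost, Fintype.sum_bool, ← mul_add, mul_div_mul_left _ _ one_half_pos.ne',
      div_add_eq_inv_one_add_div _ (prod_pos fun k _ => hlike_pos _ _).ne', ← prod_div_distrib]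
    simp only [ρ, bsc_likelihood_ratio hlike, ← hβ]
  have hpost_sum : ∀ x, ∑ w, post x w = 1 := fun x => by
    simp_rw [hpost, ← sum_div]
    exact div_self (sum_pos (fun w _ => mul_pos one_half_pos (prod_pos fun k _ => hlike_pos _ _))
      univ_nonempty).ne'
  calc _ = univ.sup' univ_nonempty
        (fun xp : (Fin n → Bool) × (Fin n → Bool) => |post xp.1 true - post xp.2 true|) :=
        sup'_congr _ rfl fun xp _ => half_mul_sum_bool_abs_sub (hpost_sum _) (hpost_sum _)
    _ = (1 + β ^ n)⁻¹ - (1 + (β ^ n)⁻¹)⁻¹ := by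
        refine sup'_abs_sub_eq_of_mem_Icc (g := fun x => post x true)
          (i₀ := fun _ : Fin n => true) (i₁ := fun _ : Fin n => false) (fun x => ?_) ?_ ?_
        · simpa only [hpost_true] using inv_one_add_mem_Icc (pow_pos hβ0 n) (hρ x)
        all_goals simp [hpost_true, ρ]
    _ = (1 - β ^ n) / (1 + β ^ n) := by
        field_simp
        ring
end

section
/- For W uniform on [0,1] and X^n consisting of n i.i.d. Bern(W) samples given W, the posterior density is P_{W|X^n}(w|x^n) = (n+1)·C(n,s)·w^s(1−w)^{n−s} where s is the number of ones in x^n, and the Dobrushin coefficient of the posterior kernel is ϑ(P_{W|X^n}) = 1 − 2^{−n}. -/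
open Finset Real

lemma prodfac (a b : ℕ) : a.factorial * ∏ j ∈ Finset.range (b+1), (a+1+j) = (a+b+1).factorial := by
  induction b with
  | zero => simp [Nat.factorial_succ, Nat.mul_comm]
  | succ b ih =>
    rw [Finset.prod_range_succ, ← Nat.mul_assoc, ih]
    rw [show a + (b+1) + 1 = (a + b + 1) + 1 from by ring, Nat.factorial_succ, Nat.mul_comm]
    congr 1
    omega

lemma beta_nat (a b : ℕ) :
    ∫ t in (0:ℝ)..1, t^a * (1-t)^b = (a.factorial * b.factorial : ℝ) / (a+b+1).factorial := by
  have h := Complex.betaIntegral_eval_nat_add_one_right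
    (u := (a:ℂ)+1) (by simp; positivity) b
  rw [Complex.betaIntegral] at h
  have h2 : ∫ (x:ℝ) in (0:ℝ)..1, (x:ℂ) ^ ((a:ℂ)+1-1) * (1-(x:ℂ)) ^ ((b:ℂ)+1-1)
      = ((∫ t in (0:ℝ)..1, t^a * (1-t)^b : ℝ) : ℂ) := by
    rw [← intervalIntegral.integral_ofReal]
    apply intervalIntegral.integral_congr_ae
    filter_upwards with x
    intro hx
    rw [add_sub_cancel_right, add_sub_cancel_right, Complex.cpow_natCast, Complex.cpow_natCast]
    push_cast; ring
  rw [h2] at h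
  have h3 : (∏ j ∈ Finset.range (b+1), ((a:ℂ)+1+(j:ℕ)))
      = ((∏ j ∈ Finset.range (b+1), (a+1+j) : ℕ) : ℂ) := by
    push_cast; ring_nf
  rw [h3] at h
  have hne : ((∏ j ∈ Finset.range (b+1), (a+1+j) : ℕ) : ℂ) ≠ 0 := by
    simp only [ne_eq, Nat.cast_eq_zero, Finset.prod_eq_zero_iff]
    push_neg; intro i _; omega
  have hfac : (((a+b+1).factorial : ℕ) : ℂ) ≠ 0 := by
    exact_mod_cast (a+b+1).factorial_ne_zero
  have key : ((∫ t in (0:ℝ)..1, t^a * (1-t)^b : ℝ) : ℂ)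
      = ((a.factorial : ℕ) : ℂ) * ((b.factorial : ℕ) : ℂ) / (((a+b+1).factorial : ℕ) : ℂ) := by
    rw [h, div_eq_div_iff hne hfac]
    have hc : (((a+b+1).factorial : ℕ) : ℂ)
        = ((a.factorial : ℕ) : ℂ) * ((∏ j ∈ Finset.range (b+1), (a+1+j) : ℕ) : ℂ) := by
      exact_mod_cast (prodfac a b).symm
    rw [hc]; ring
  apply Complex.ofReal_injective
  rw [key]; push_cast; ring

lemma choose_pos_real (n a : ℕ) (ha : a ≤ n) : (0:ℝ) < ((n:ℝ)+1) * (n.choose a) := by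
  have := Nat.choose_pos ha
  positivity

lemma normval (n a : ℕ) (ha : a ≤ n) :
    ∫ t in (0:ℝ)..1, t^a * (1-t)^(n-a) = 1/(((n:ℝ)+1) * (n.choose a)) := by
  rw [beta_nat]
  have h1 : a + (n-a) + 1 = n + 1 := by omega
  rw [h1]
  have h2 : (n.choose a) * a.factorial * (n-a).factorial = n.factorial :=
    Nat.choose_mul_factorial_mul_factorial ha
  have h2' : ((n.choose a : ℝ)) * a.factorial * (n-a).factorial = n.factorial := by
    exact_mod_cast congrArg (Nat.cast : ℕ → ℝ) h2
  have h3 : ((n+1).factorial : ℝ) = ((n:ℝ)+1) * n.factorial := by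
    rw [Nat.factorial_succ]; push_cast; ring
  rw [div_eq_div_iff (by positivity) (choose_pos_real n a ha).ne', h3, ← h2']
  ring

lemma gcont (n a : ℕ) :
    Continuous (fun w : ℝ => ((n:ℝ)+1) * (n.choose a) * w^a * (1-w)^(n-a)) := by
  fun_prop

lemma gnorm (n a : ℕ) (ha : a ≤ n) :
    ∫ w in (0:ℝ)..1, ((n:ℝ)+1) * (n.choose a) * w^a * (1-w)^(n-a) = 1 := by
  have : ∀ w : ℝ, ((n:ℝ)+1) * (n.choose a) * w^a * (1-w)^(n-a)
      = (((n:ℝ)+1) * (n.choose a)) * (w^a * (1-w)^(n-a)) := fun w => by ring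
  simp_rw [this]
  rw [intervalIntegral.integral_const_mul, normval n a ha]
  rw [mul_one_div, div_self (choose_pos_real n a ha).ne']

lemma glb (n a : ℕ) (ha : a ≤ n) (w : ℝ) (hw : w ∈ Set.Icc (0:ℝ) 1) :
    ((n:ℝ)+1) * (min w (1-w))^n ≤ ((n:ℝ)+1) * (n.choose a) * w^a * (1-w)^(n-a) := by
  obtain ⟨hw0, hw1⟩ := hw
  set m := min w (1-w) with hm
  have hm0 : 0 ≤ m := le_min hw0 (by linarith)
  have h1 : m^a ≤ w^a := pow_le_pow_left₀ hm0 (min_le_left _ _) a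
  have h2 : m^(n-a) ≤ (1-w)^(n-a) := pow_le_pow_left₀ hm0 (min_le_right _ _) _
  have hc : (1:ℝ) ≤ (n.choose a : ℝ) := by
    have h : (1:ℕ) ≤ n.choose a := Nat.choose_pos ha
    exact_mod_cast h
  have hmn : m^n = m^a * m^(n-a) := by rw [← pow_add]; congr 1; omega
  have key : m^n ≤ (n.choose a : ℝ) * (w^a * (1-w)^(n-a)) := by
    calc m^n = m^a * m^(n-a) := hmn
    _ ≤ w^a * (1-w)^(n-a) := by
        apply mul_le_mul h1 h2 (pow_nonneg hm0 _) (pow_nonneg hw0 _)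
    _ ≤ (n.choose a : ℝ) * (w^a * (1-w)^(n-a)) := by
        nlinarith [pow_nonneg hw0 a, pow_nonneg (by linarith : (0:ℝ) ≤ 1-w) (n-a),
          mul_nonneg (pow_nonneg hw0 a) (pow_nonneg (by linarith : (0:ℝ) ≤ 1-w) (n-a))]
  nlinarith [key, (Nat.cast_nonneg n : (0:ℝ) ≤ n)]

lemma mincont (n : ℕ) : Continuous (fun w : ℝ => ((n:ℝ)+1) * (min w (1-w))^n) := by
  apply Continuous.mul continuous_const
  exact (continuous_id.min (continuous_const.sub continuous_id)).pow n

lemma minint (n : ℕ) :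
    ∫ w in (0:ℝ)..1, ((n:ℝ)+1) * (min w (1-w))^n = (1/2:ℝ)^n := by
  have i1 : ∫ w in (0:ℝ)..(1/2:ℝ), ((n:ℝ)+1) * (min w (1-w))^n
      = ∫ w in (0:ℝ)..(1/2:ℝ), ((n:ℝ)+1) * w^n := by
    apply intervalIntegral.integral_congr
    intro w hw
    rw [Set.uIcc_of_le (by norm_num)] at hw
    have : min w (1-w) = w := min_eq_left (by obtain ⟨h1, h2⟩ := hw; linarith)
    dsimp only
    rw [this]
  have i2 : ∫ w in (1/2:ℝ)..1, ((n:ℝ)+1) * (min w (1-w))^n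
      = ∫ w in (1/2:ℝ)..1, ((n:ℝ)+1) * (1-w)^n := by
    apply intervalIntegral.integral_congr
    intro w hw
    rw [Set.uIcc_of_le (by norm_num)] at hw
    have : min w (1-w) = 1-w := min_eq_right (by obtain ⟨h1, h2⟩ := hw; linarith)
    dsimp only
    rw [this]
  have v1 : ∫ w in (0:ℝ)..(1/2:ℝ), ((n:ℝ)+1) * w^n = (1/2:ℝ)^(n+1) := by
    rw [intervalIntegral.integral_const_mul, integral_pow]
    have : ((n:ℝ)+1) ≠ 0 := by positivity
    field_simp
    ring
  have v2 : ∫ w in (1/2:ℝ)..1, ((n:ℝ)+1) * (1-w)^n = (1/2:ℝ)^(n+1) := by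
    have hc : ∫ w in (1/2:ℝ)..1, (fun x => ((n:ℝ)+1) * x^n) (1 - w)
        = ∫ x in (1-(1:ℝ))..(1-(1/2:ℝ)), ((n:ℝ)+1) * x^n :=
      intervalIntegral.integral_comp_sub_left (fun x => ((n:ℝ)+1) * x^n) 1
    simp only at hc
    rw [hc]
    norm_num [intervalIntegral.integral_const_mul, integral_pow]
    have h0 : ((n:ℝ)+1) ≠ 0 := by positivity
    field_simp
  have hadj : (∫ w in (0:ℝ)..(1/2:ℝ), ((n:ℝ)+1) * (min w (1-w))^n)
      + ∫ w in (1/2:ℝ)..1, ((n:ℝ)+1) * (min w (1-w))^n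
      = ∫ w in (0:ℝ)..1, ((n:ℝ)+1) * (min w (1-w))^n := by
    exact intervalIntegral.integral_add_adjacent_intervals
      ((mincont n).intervalIntegrable (μ := MeasureTheory.volume) 0 (1/2))
      ((mincont n).intervalIntegrable (μ := MeasureTheory.volume) (1/2) 1)
  rw [← hadj, i1, i2, v1, v2, pow_succ]
  ring

lemma abs_sub_eq (x y : ℝ) : |x - y| = x + y - 2 * min x y := by
  rcases le_total x y with h | h
  · rw [min_eq_left h, abs_of_nonpos (by linarith)]; ring
  · rw [min_eq_right h, abs_of_nonneg (by linarith)]; ring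

lemma tv_eq (n a b : ℕ) (ha : a ≤ n) (hb : b ≤ n) :
    (1/2:ℝ) * ∫ w in (0:ℝ)..1,
      |((n:ℝ)+1)*(n.choose a)*w^a*(1-w)^(n-a) - ((n:ℝ)+1)*(n.choose b)*w^b*(1-w)^(n-b)|
    = 1 - ∫ w in (0:ℝ)..1,
      min (((n:ℝ)+1)*(n.choose a)*w^a*(1-w)^(n-a)) (((n:ℝ)+1)*(n.choose b)*w^b*(1-w)^(n-b)) := by
  have hfi := (gcont n a).intervalIntegrable (μ := MeasureTheory.volume) 0 1
  have hgi := (gcont n b).intervalIntegrable (μ := MeasureTheory.volume) 0 1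
  have hmi : IntervalIntegrable (fun w : ℝ =>
      min (((n:ℝ)+1)*(n.choose a)*w^a*(1-w)^(n-a)) (((n:ℝ)+1)*(n.choose b)*w^b*(1-w)^(n-b)))
      MeasureTheory.volume 0 1 :=
    ((gcont n a).min (gcont n b)).intervalIntegrable 0 1
  have h1 : ∫ w in (0:ℝ)..1,
      |((n:ℝ)+1)*(n.choose a)*w^a*(1-w)^(n-a) - ((n:ℝ)+1)*(n.choose b)*w^b*(1-w)^(n-b)|
      = (∫ w in (0:ℝ)..1, ((n:ℝ)+1)*(n.choose a)*w^a*(1-w)^(n-a))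
        + (∫ w in (0:ℝ)..1, ((n:ℝ)+1)*(n.choose b)*w^b*(1-w)^(n-b))
        - 2 * ∫ w in (0:ℝ)..1,
          min (((n:ℝ)+1)*(n.choose a)*w^a*(1-w)^(n-a)) (((n:ℝ)+1)*(n.choose b)*w^b*(1-w)^(n-b)) := by
    have : (fun w : ℝ =>
        |((n:ℝ)+1)*(n.choose a)*w^a*(1-w)^(n-a) - ((n:ℝ)+1)*(n.choose b)*w^b*(1-w)^(n-b)|)
        = fun w : ℝ => (((n:ℝ)+1)*(n.choose a)*w^a*(1-w)^(n-a)
          + ((n:ℝ)+1)*(n.choose b)*w^b*(1-w)^(n-b))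
          - 2 * min (((n:ℝ)+1)*(n.choose a)*w^a*(1-w)^(n-a))
              (((n:ℝ)+1)*(n.choose b)*w^b*(1-w)^(n-b)) := by
      funext w; rw [abs_sub_eq]
    rw [this, intervalIntegral.integral_sub (hfi.add hgi) (hmi.const_mul 2),
      intervalIntegral.integral_add hfi hgi, intervalIntegral.integral_const_mul]
  rw [h1, gnorm n a ha, gnorm n b hb]
  ring

lemma min_ge (n a b : ℕ) (ha : a ≤ n) (hb : b ≤ n) :
    (1/2:ℝ)^n ≤ ∫ w in (0:ℝ)..1,
      min (((n:ℝ)+1)*(n.choose a)*w^a*(1-w)^(n-a)) (((n:ℝ)+1)*(n.choose b)*w^b*(1-w)^(n-b)) := by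
  rw [← minint n]
  apply intervalIntegral.integral_mono_on (by norm_num)
    ((mincont n).intervalIntegrable (μ := MeasureTheory.volume) 0 1)
    (((gcont n a).min (gcont n b)).intervalIntegrable (μ := MeasureTheory.volume) 0 1)
  intro w hw
  exact le_min (glb n a ha w hw) (glb n b hb w hw)

lemma min_extreme (n : ℕ) :
    ∫ w in (0:ℝ)..1,
      min (((n:ℝ)+1)*(n.choose n)*w^n*(1-w)^(n-n)) (((n:ℝ)+1)*(n.choose 0)*w^0*(1-w)^(n-0))
    = (1/2:ℝ)^n := by
  rw [← minint n]
  apply intervalIntegral.integral_congr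
  intro w hw
  rw [Set.uIcc_of_le (by norm_num : (0:ℝ) ≤ 1)] at hw
  obtain ⟨hw0, hw1⟩ := hw
  simp only [Nat.choose_self, Nat.choose_zero_right, Nat.cast_one, Nat.sub_self, Nat.sub_zero,
    pow_zero, mul_one, one_mul]
  have hn1 : (0:ℝ) ≤ (n:ℝ)+1 := by positivity
  rcases le_total w (1-w) with h | h
  · rw [min_eq_left h]
    rw [min_eq_left]
    apply mul_le_mul_of_nonneg_left (pow_le_pow_left₀ hw0 h n) hn1
  · rw [min_eq_right h]
    rw [min_eq_right]
    apply mul_le_mul_of_nonneg_left (pow_le_pow_left₀ (by linarith) h n) hn1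

/-- for W ∼ Uniform[0,1] and n i.i.d. Bern(W) samples, the posterior
density is (n+1)·C(n,s)·w^s(1−w)^{n−s} (s = number of ones), and the Dobrushin
coefficient of the posterior kernel equals 1 − 2^{−n}. -/
theorem dobrushin_posterior_bernoulli
    (n : ℕ) (hn : 0 < n)
    (s : (Fin n → Bool) → ℕ)
    (hs : ∀ x, s x = (Finset.univ.filter (fun k => x k = true)).card)
    (post : (Fin n → Bool) → ℝ → ℝ)
    (hpost : ∀ x w, post x w =
      ((n : ℝ) + 1) * (n.choose (s x) : ℝ) * w ^ (s x) * (1 - w) ^ (n - s x)) :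
    (∀ x : Fin n → Bool, ∀ w : ℝ,
      w ^ (s x) * (1 - w) ^ (n - s x) /
        (∫ t in (0:ℝ)..1, t ^ (s x) * (1 - t) ^ (n - s x)) = post x w) ∧
    Finset.univ.sup' Finset.univ_nonempty
      (fun xp : (Fin n → Bool) × (Fin n → Bool) =>
        (1/2) * ∫ w in (0:ℝ)..1, |post xp.1 w - post xp.2 w|) =
      1 - (1/2 : ℝ) ^ n := by
  have hsle : ∀ x : Fin n → Bool, s x ≤ n := by
    intro x
    rw [hs x]
    exact le_trans (Finset.card_filter_le _ _) (by simp)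
  constructor
  · intro x w
    rw [normval n (s x) (hsle x), hpost, one_div, div_inv_eq_mul]
    ring
  · have htv : ∀ x1 x2 : Fin n → Bool,
        (1/2:ℝ) * ∫ w in (0:ℝ)..1, |post x1 w - post x2 w|
        = 1 - ∫ w in (0:ℝ)..1,
          min (((n:ℝ)+1)*(n.choose (s x1))*w^(s x1)*(1-w)^(n-s x1))
              (((n:ℝ)+1)*(n.choose (s x2))*w^(s x2)*(1-w)^(n-s x2)) := by
      intro x1 x2
      have he : (fun w : ℝ => |post x1 w - post x2 w|)
          = fun w : ℝ => |((n:ℝ)+1)*(n.choose (s x1))*w^(s x1)*(1-w)^(n-s x1)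
            - ((n:ℝ)+1)*(n.choose (s x2))*w^(s x2)*(1-w)^(n-s x2)| := by
        funext w; rw [hpost, hpost]
      rw [he]
      exact tv_eq n (s x1) (s x2) (hsle x1) (hsle x2)
    apply le_antisymm
    · apply Finset.sup'_le
      intro p _
      rw [htv p.1 p.2]
      have := min_ge n (s p.1) (s p.2) (hsle p.1) (hsle p.2)
      linarith
    · have hs1 : s (fun _ => true) = n := by rw [hs]; simp
      have hs2 : s (fun _ => false) = 0 := by rw [hs]; simp
      have hval : (fun xp : (Fin n → Bool) × (Fin n → Bool) =>
          (1/2:ℝ) * ∫ w in (0:ℝ)..1, |post xp.1 w - post xp.2 w|)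
          ((fun _ => true), (fun _ => false)) = 1 - (1/2:ℝ)^n := by
        simp only
        rw [htv (fun _ => true) (fun _ => false), hs1, hs2, min_extreme n]
      calc (1:ℝ) - (1/2:ℝ)^n = _ := hval.symm
        _ ≤ _ := Finset.le_sup'
          (fun xp : (Fin n → Bool) × (Fin n → Bool) =>
            (1/2:ℝ) * ∫ w in (0:ℝ)..1, |post xp.1 w - post xp.2 w|)
          (Finset.mem_univ (((fun _ => true), (fun _ => false)) : (Fin n → Bool) × (Fin n → Bool)))
end
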